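/- arXiv:1808.03139 — 10 statements merged into one kernel-verified Lean document; each statement's English description precedes it below -/
import Mathlib

section
/- Let Δ ≥ 3 be a natural number and let f = sin(π/Δ)/(1 + sin(π/Δ)). Let α be a real number with 0 < α and α ≤ min( f/(1+f) , f·√(1 − 2f·cos(2π/Δ) + f²) − f³/(1−f) ). Then every finite tree G with maximum degree at most Δ admits a straight-line drawing whose ply disks (with parameter α) are pairwise disjoint, i.e., a drawing with ply number 1. -/
open Real

/-- The ply-disk radius of a vertex `v` in a straight-line drawing `ρ` with
parameter `α`: `α` times the maximum distance from `ρ v` to a drawn neighbor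
(`0` if `v` is isolated, since in `ℝ` the supremum over an empty family is `0`). -/
noncomputable def plyRadius {V : Type*} (G : SimpleGraph V)
    (ρ : V → EuclideanSpace ℝ (Fin 2)) (α : ℝ) (v : V) : ℝ :=
  α * ⨆ w : G.neighborSet v, dist (ρ v) (ρ w)

/-!
Root the tree at `r` and draw it level by level: a vertex of depth `d` lies at distance `f ^ d`
from its parent, and the edges at each vertex point in `Δ` equally spaced directions, one of
them taken by the edge to the parent. The ply disk of a vertex of depth `d` then has radius at
most `α f ^ d`, and since `f / (1 - f) = sin (π / Δ)`, the subtree below a vertex of depth `d`,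
ply disks included, stays within the geometric sum `f ^ (d + 1) / (1 - f)` of it, while two
siblings of depth `d` are at least `2 sin (π / Δ) f ^ d` apart. Two ply disks are therefore
disjoint when neither vertex is an ancestor of the other (their subtrees hang off distinct
siblings), when one is the parent of the other (by `α ≤ f / (1 + f)`), and when one is a
grandparent or higher ancestor of the other (by the second bound on `α`, which compares the
distance `f ^ (d + 1) √(1 - 2 f cos (2π/Δ) + f²)` from a vertex to a grandchild with the extent
of the grandchild's subtree).
-/

noncomputable def unitVec (θ : ℝ) : EuclideanSpace ℝ (Fin 2) := !₂[cos θ, sin θ]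

lemma norm_smul_unitVec_add_smul_unitVec_sq (a b s t : ℝ) :
    ‖a • unitVec s + b • unitVec t‖ ^ 2 = a ^ 2 + b ^ 2 + 2 * a * b * cos (s - t) := by
  rw [EuclideanSpace.norm_sq_eq, Fin.sum_univ_two]
  simp only [unitVec, PiLp.add_apply, PiLp.smul_apply, Matrix.cons_val_zero, smul_eq_mul,
    norm_eq_abs, sq_abs, Matrix.cons_val_one, Matrix.cons_val_fin_one, cos_sub]
  linear_combination a ^ 2 * sin_sq_add_cos_sq s + b ^ 2 * sin_sq_add_cos_sq t

lemma norm_unitVec (θ : ℝ) : ‖unitVec θ‖ = 1 := by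
  simp [EuclideanSpace.norm_eq, unitVec]

lemma cos_le_cos_of_le_of_le_two_pi_sub {a t : ℝ} (ha : 0 ≤ a) (hat : a ≤ t)
    (ht : t ≤ 2 * π - a) : cos t ≤ cos a := by
  rcases le_total t π with htπ | hπt
  · exact cos_le_cos_of_nonneg_of_le_pi ha htπ hat
  · rw [← cos_two_pi_sub t]
    exact cos_le_cos_of_nonneg_of_le_pi ha (by linarith) (by linarith)

lemma cos_two_pi_mul_sub_div_le {Δ i j : ℕ} (hi : i < Δ) (hj : j < Δ) (hij : i ≠ j) :
    cos (2 * π * ((i : ℝ) - j) / Δ) ≤ cos (2 * π / Δ) := by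
  have hΔ : (0 : ℝ) < Δ := by exact_mod_cast (Nat.zero_le i).trans_lt hi
  have hi' : (i : ℝ) + 1 ≤ Δ := by exact_mod_cast hi
  have hj' : (j : ℝ) + 1 ≤ Δ := by exact_mod_cast hj
  have h1 : 1 ≤ |(i : ℝ) - j| := by
    rcases hij.lt_or_gt with h | h
    · have : (i : ℝ) + 1 ≤ j := by exact_mod_cast h
      rw [abs_sub_comm, le_abs]; left; linarith
    · have : (j : ℝ) + 1 ≤ i := by exact_mod_cast h
      rw [le_abs]; left; linarith
  have h2 : |(i : ℝ) - j| ≤ Δ - 1 := by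
    rw [abs_le]
    constructor <;> linarith [Nat.cast_nonneg (α := ℝ) i, Nat.cast_nonneg (α := ℝ) j]
  rw [← cos_abs, abs_div, abs_mul, abs_of_pos two_pi_pos, abs_of_pos hΔ]
  apply cos_le_cos_of_le_of_le_two_pi_sub (by positivity)
  · exact div_le_div_of_nonneg_right (le_mul_of_one_le_right two_pi_pos.le h1) hΔ.le
  · calc 2 * π * |(i : ℝ) - j| / Δ ≤ 2 * π * (Δ - 1) / Δ := by gcongr
      _ = 2 * π - 2 * π / Δ := by field_simp

namespace SimpleGraph

variable {V : Type*} {G : SimpleGraph V}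

section NeighborIndex

variable [DecidableEq V] [G.LocallyFinite]

noncomputable def neighborIndex (v w : V) : ℕ := (G.neighborFinset v).toList.idxOf w

lemma neighborIndex_lt_degree {v w : V} (h : G.Adj v w) : G.neighborIndex v w < G.degree v := by
  rw [neighborIndex, ← card_neighborFinset_eq_degree, ← Finset.length_toList]
  exact List.idxOf_lt_length_iff.2 (by simpa using h)

lemma neighborIndex_inj {v w₁ w₂ : V} (h : G.Adj v w₁) :
    G.neighborIndex v w₁ = G.neighborIndex v w₂ ↔ w₁ = w₂ :=
  List.idxOf_inj (by simpa using h)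

end NeighborIndex

namespace IsTree

variable (hT : G.IsTree) (r : V)

noncomputable def pathToRoot (v : V) : G.Walk v r := (hT.existsUnique_path v r).choose

lemma isPath_pathToRoot (v : V) : (hT.pathToRoot r v).IsPath :=
  (hT.existsUnique_path v r).choose_spec.1

lemma eq_pathToRoot {v : V} {p : G.Walk v r} (hp : p.IsPath) : p = hT.pathToRoot r v :=
  (hT.existsUnique_path v r).choose_spec.2 p hp

noncomputable def depth (v : V) : ℕ := (hT.pathToRoot r v).length

noncomputable def parent (v : V) : V := (hT.pathToRoot r v).snd

variable {r}

lemma depth_eq_zero_iff {v : V} : hT.depth r v = 0 ↔ v = r := by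
  refine ⟨fun h => (Walk.length_eq_zero_iff.1 h).eq, ?_⟩
  rintro rfl
  rw [depth, ← hT.eq_pathToRoot _ Walk.IsPath.nil, Walk.length_nil]

@[simp] lemma depth_root : hT.depth r r = 0 := (hT.depth_eq_zero_iff).2 rfl

@[simp] lemma parent_root : hT.parent r r = r := by
  rw [parent, ← hT.eq_pathToRoot r Walk.IsPath.nil]; rfl

lemma not_nil_pathToRoot {v : V} (hv : v ≠ r) : ¬(hT.pathToRoot r v).Nil :=
  fun h => hv h.eq

lemma adj_parent {v : V} (hv : v ≠ r) : G.Adj v (hT.parent r v) :=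
  Walk.adj_snd (hT.not_nil_pathToRoot hv)

lemma depth_parent_add_one {v : V} (hv : v ≠ r) :
    hT.depth r (hT.parent r v) + 1 = hT.depth r v := by
  have htail : (hT.pathToRoot r v).tail = hT.pathToRoot r (hT.parent r v) :=
    hT.eq_pathToRoot r (hT.isPath_pathToRoot r v).tail
  exact (congrArg (Walk.length · + 1) htail).symm.trans
    (Walk.length_tail_add_one (hT.not_nil_pathToRoot hv))

lemma depth_parent_lt {v : V} (hv : v ≠ r) : hT.depth r (hT.parent r v) < hT.depth r v := by
  have := hT.depth_parent_add_one hv; omega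

lemma depth_parent (v : V) : hT.depth r (hT.parent r v) = hT.depth r v - 1 := by
  by_cases hv : v = r
  · simp [hv]
  · have := hT.depth_parent_add_one hv; omega

lemma depth_iterate_parent (k : ℕ) (v : V) :
    hT.depth r ((hT.parent r)^[k] v) = hT.depth r v - k := by
  induction k with
  | zero => rfl
  | succ k ih => rw [Function.iterate_succ_apply', depth_parent, ih]; omega

lemma parent_eq_or_parent_eq_of_adj {v w : V} (h : G.Adj v w) :
    hT.parent r w = v ∨ hT.parent r v = w := by
  by_cases hw : w ∈ (hT.pathToRoot r v).support
  · exact .inr (hT.isAcyclic.eq_snd_of_adj_start (hT.isPath_pathToRoot r v) h hw).symm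
  · left
    have hp : (Walk.cons h.symm (hT.pathToRoot r v)).IsPath :=
      (Walk.cons_isPath_iff _ _).2 ⟨hT.isPath_pathToRoot r v, hw⟩
    rw [parent, ← hT.eq_pathToRoot r hp, Walk.snd_cons]

lemma ne_root_of_depth_eq {x y : V} (hd : hT.depth r x = hT.depth r y) (hxy : x ≠ y) : x ≠ r := by
  rintro rfl
  exact hxy ((hT.depth_eq_zero_iff.1 (hd ▸ hT.depth_root)).symm)

lemma exists_ne_parent_eq {x y : V} (hd : hT.depth r x = hT.depth r y) (hxy : x ≠ y) :
    ∃ j, (hT.parent r)^[j] x ≠ (hT.parent r)^[j] y ∧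
      hT.parent r ((hT.parent r)^[j] x) = hT.parent r ((hT.parent r)^[j] y) := by
  classical
  have hex : ∃ n, (hT.parent r)^[n] x = (hT.parent r)^[n] y := by
    refine ⟨hT.depth r x, (hT.depth_eq_zero_iff (r := r)).1 ?_ |>.trans
      ((hT.depth_eq_zero_iff (r := r)).1 ?_).symm⟩ <;>
      simp [depth_iterate_parent, hd]
  obtain ⟨j, hj⟩ : ∃ j, Nat.find hex = j + 1 :=
    Nat.exists_eq_add_one.2 (Nat.pos_of_ne_zero fun h => hxy (by simpa [h] using Nat.find_spec hex))
  refine ⟨j, Nat.find_min hex (by omega), ?_⟩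
  simpa only [hj, Function.iterate_succ_apply'] using Nat.find_spec hex

end IsTree

end SimpleGraph

namespace TreeDrawing

variable {V : Type*} {G : SimpleGraph V} (hT : G.IsTree) {r : V}

variable [DecidableEq V] [G.LocallyFinite]

variable (r) (Δ : ℕ) in
/-- The direction `parent v → v` is that of `parent v → parent (parent v)` turned by `2π / Δ`
times the difference of their neighbor indices at `parent v`. At the root, `parent r = r` is
not a neighbor of `r`, and its index only fixes a rotation. -/
noncomputable def angle (v : V) : ℝ :=
  if v = r then 0 else
    angle (hT.parent r v) + π + 2 * π * ((G.neighborIndex (hT.parent r v) v : ℝ) -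
      G.neighborIndex (hT.parent r v) (hT.parent r (hT.parent r v))) / Δ
termination_by hT.depth r v
decreasing_by exact hT.depth_parent_lt ‹_›

variable (r) (Δ : ℕ) (f : ℝ) in
noncomputable def drawing (v : V) : EuclideanSpace ℝ (Fin 2) :=
  if v = r then 0 else
    drawing (hT.parent r v) + f ^ hT.depth r v • unitVec (angle hT r Δ v)
termination_by hT.depth r v
decreasing_by exact hT.depth_parent_lt ‹_›

variable {Δ : ℕ} {f : ℝ}

local notation "ρ" => drawing hT r Δ f

lemma angle_sub_angle_parent {c : V} (hc : c ≠ r) :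
    angle hT r Δ c - angle hT r Δ (hT.parent r c) =
      π + 2 * π * ((G.neighborIndex (hT.parent r c) c : ℝ) -
        G.neighborIndex (hT.parent r c) (hT.parent r (hT.parent r c))) / Δ := by
  rw [angle, if_neg hc]; ring

lemma drawing_sub_drawing_parent {v : V} (hv : v ≠ r) :
    ρ v - ρ (hT.parent r v) = f ^ hT.depth r v • unitVec (angle hT r Δ v) := by
  rw [drawing, if_neg hv, add_sub_cancel_left]

lemma dist_drawing_parent (hf : 0 ≤ f) {v : V} (hv : v ≠ r) :
    dist (ρ v) (ρ (hT.parent r v)) = f ^ hT.depth r v := by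
  rw [dist_eq_norm, drawing_sub_drawing_parent hT hv, norm_smul, norm_unitVec, mul_one,
    norm_of_nonneg (pow_nonneg hf _)]

lemma two_mul_sin_mul_pow_le_dist_drawing (hdeg : ∀ v, G.degree v ≤ Δ)
    {c₁ c₂ : V} (h₁ : c₁ ≠ r) (h₂ : c₂ ≠ r) (hne : c₁ ≠ c₂)
    (hp : hT.parent r c₁ = hT.parent r c₂) :
    2 * sin (π / Δ) * f ^ hT.depth r c₁ ≤ dist (ρ c₁) (ρ c₂) := by
  have hd : hT.depth r c₂ = hT.depth r c₁ := by
    have := hT.depth_parent_add_one h₂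
    rw [← hp, hT.depth_parent_add_one h₁] at this
    exact this.symm
  set p := hT.parent r c₁
  have hadj₁ : G.Adj p c₁ := (hT.adj_parent h₁).symm
  have hadj₂ : G.Adj p c₂ := hp ▸ (hT.adj_parent h₂).symm
  have hθ : angle hT r Δ c₁ - angle hT r Δ c₂ =
      2 * π * ((G.neighborIndex p c₁ : ℝ) - G.neighborIndex p c₂) / Δ := by
    have e₁ := angle_sub_angle_parent hT (Δ := Δ) h₁
    have e₂ := angle_sub_angle_parent hT (Δ := Δ) h₂
    rw [← hp] at e₂
    linear_combination e₁ - e₂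
  have hcos : cos (angle hT r Δ c₁ - angle hT r Δ c₂) ≤ 1 - 2 * sin (π / Δ) ^ 2 := by
    have h2 : 1 - 2 * sin (π / Δ) ^ 2 = cos (2 * π / Δ) := by
      rw [mul_div_assoc, cos_two_mul, cos_sq']; ring
    rw [hθ, h2]
    exact cos_two_pi_mul_sub_div_le ((G.neighborIndex_lt_degree hadj₁).trans_le (hdeg p))
      ((G.neighborIndex_lt_degree hadj₂).trans_le (hdeg p)) ((G.neighborIndex_inj hadj₁).not.2 hne)
  have hsub : ρ c₁ - ρ c₂ =
      f ^ hT.depth r c₁ • unitVec (angle hT r Δ c₁) +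
        (-f ^ hT.depth r c₁) • unitVec (angle hT r Δ c₂) := by
    rw [← sub_sub_sub_cancel_right _ _ (ρ p), drawing_sub_drawing_parent hT h₁, hp,
      drawing_sub_drawing_parent hT h₂, hd, neg_smul, sub_eq_add_neg]
  have hsq : (2 * sin (π / Δ) * f ^ hT.depth r c₁) ^ 2 ≤ ‖ρ c₁ - ρ c₂‖ ^ 2 := by
    rw [hsub, norm_smul_unitVec_add_smul_unitVec_sq]
    nlinarith [mul_le_mul_of_nonneg_left hcos (sq_nonneg (f ^ hT.depth r c₁))]
  rw [dist_eq_norm]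
  exact (abs_le_of_sq_le_sq' hsq (norm_nonneg _)).2

lemma pow_mul_sqrt_le_dist_drawing (hf : 0 ≤ f) (hdeg : ∀ v, G.degree v ≤ Δ)
    {v c : V} (hv : v ≠ r) (hc : hT.parent r c = v) :
    f ^ hT.depth r v * √(1 - 2 * f * cos (2 * π / Δ) + f ^ 2) ≤ dist (ρ (hT.parent r v)) (ρ c) := by
  have hcr : c ≠ r := by rintro rfl; exact hv (hc.symm.trans hT.parent_root)
  have hdc : hT.depth r c = hT.depth r v + 1 := by rw [← hT.depth_parent_add_one hcr, hc]
  have hadj : G.Adj v c := hc ▸ (hT.adj_parent hcr).symm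
  have hne : c ≠ hT.parent r v := by
    rintro rfl; have := hT.depth_parent_add_one hv; omega
  have hcos : cos (2 * π * ((G.neighborIndex v c : ℝ) - G.neighborIndex v (hT.parent r v)) / Δ) ≤
      cos (2 * π / Δ) :=
    cos_two_pi_mul_sub_div_le ((G.neighborIndex_lt_degree hadj).trans_le (hdeg v))
      ((G.neighborIndex_lt_degree (hT.adj_parent hv)).trans_le (hdeg v))
      ((G.neighborIndex_inj hadj).not.2 hne)
  have hθ : cos (angle hT r Δ v - angle hT r Δ c) =
      -cos (2 * π * ((G.neighborIndex v c : ℝ) - G.neighborIndex v (hT.parent r v)) / Δ) := by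
    have e := angle_sub_angle_parent hT (Δ := Δ) hcr
    rw [hc] at e
    rw [← cos_neg, neg_sub, e, add_comm, cos_add_pi]
  have hsub : ρ c - ρ (hT.parent r v) =
      f ^ hT.depth r v • unitVec (angle hT r Δ v) +
        (f ^ hT.depth r v * f) • unitVec (angle hT r Δ c) := by
    rw [← sub_add_sub_cancel _ (ρ v), drawing_sub_drawing_parent hT hv,
      ← hc, drawing_sub_drawing_parent hT hcr, hc, hdc, pow_succ, add_comm]
  have hQ : 0 ≤ 1 - 2 * f * cos (2 * π / Δ) + f ^ 2 := by
    nlinarith [cos_le_one (2 * π / Δ), sq_nonneg (1 - f)]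
  have hsq : (f ^ hT.depth r v * √(1 - 2 * f * cos (2 * π / Δ) + f ^ 2)) ^ 2 ≤
      ‖ρ c - ρ (hT.parent r v)‖ ^ 2 := by
    rw [hsub, norm_smul_unitVec_add_smul_unitVec_sq, hθ, mul_pow, sq_sqrt hQ]
    nlinarith [mul_le_mul_of_nonneg_left hcos
      (mul_nonneg (sq_nonneg (f ^ hT.depth r v)) hf)]
  rw [dist_eq_norm']
  exact (abs_le_of_sq_le_sq' hsq (norm_nonneg _)).2

variable {α : ℝ}

lemma dist_drawing_add_le_of_iterate_parent_eq (hf₀ : 0 ≤ f) (hf₁ : f < 1)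
    (hα : α ≤ f / (1 - f)) {c y : V} (k : ℕ) (hk : (hT.parent r)^[k] y = c) :
    dist (ρ c) (ρ y) + α * f ^ hT.depth r y ≤ f ^ (hT.depth r c + 1) / (1 - f) := by
  have h1f : 0 < 1 - f := sub_pos.2 hf₁
  induction k generalizing c with
  | zero =>
    subst hk
    rw [Function.iterate_zero_apply, dist_self, zero_add, pow_succ, mul_div_assoc, mul_comm]
    exact mul_le_mul_of_nonneg_left hα (pow_nonneg hf₀ _)
  | succ k ih =>
    rw [Function.iterate_succ_apply'] at hk
    subst hk
    set w := (hT.parent r)^[k] y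
    by_cases hw : w = r
    · rw [hw, hT.parent_root]; exact ih hw
    · calc dist (ρ (hT.parent r w)) (ρ y) + α * f ^ hT.depth r y
          ≤ f ^ hT.depth r w + (dist (ρ w) (ρ y) + α * f ^ hT.depth r y) := by
            rw [← dist_drawing_parent hT hf₀ hw, dist_comm (ρ w)]
            linarith [dist_triangle (ρ (hT.parent r w)) (ρ w) (ρ y)]
        _ ≤ f ^ hT.depth r w + f ^ (hT.depth r w + 1) / (1 - f) := by gcongr; exact ih rfl
        _ = f ^ (hT.depth r (hT.parent r w) + 1) / (1 - f) := by
            rw [hT.depth_parent_add_one hw]; field_simp; ring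

lemma add_le_dist_drawing_of_parent_eq (hf : 0 ≤ f) (hα : α ≤ f / (1 + f)) {x y : V}
    (hy : y ≠ r) (h : hT.parent r y = x) :
    α * f ^ hT.depth r x + α * f ^ hT.depth r y ≤ dist (ρ x) (ρ y) := by
  rw [dist_comm, ← h, dist_drawing_parent hT hf hy, ← hT.depth_parent_add_one hy, pow_succ]
  have : α * (1 + f) ≤ f := (le_div_iff₀ (by linarith)).1 hα
  nlinarith [mul_le_mul_of_nonneg_left this (pow_nonneg hf (hT.depth r (hT.parent r y)))]

lemma add_le_dist_drawing_of_grandparent (hf₀ : 0 ≤ f) (hf₁ : f < 1)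
    (hdeg : ∀ v, G.degree v ≤ Δ) (hα₁ : α ≤ f / (1 - f))
    (hα₂ : α ≤ f * √(1 - 2 * f * cos (2 * π / Δ) + f ^ 2) - f ^ 3 / (1 - f))
    {x v c y : V} (k : ℕ) (hk : (hT.parent r)^[k] y = c) (hcv : hT.parent r c = v)
    (hvx : hT.parent r v = x) (hv : v ≠ r) :
    α * f ^ hT.depth r x + α * f ^ hT.depth r y ≤ dist (ρ x) (ρ y) := by
  have hcr : c ≠ r := by rintro rfl; exact hv (hcv.symm.trans hT.parent_root)
  have hdv : hT.depth r v = hT.depth r x + 1 := by rw [← hvx, hT.depth_parent_add_one hv]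
  have hdc : hT.depth r c = hT.depth r x + 2 := by rw [← hT.depth_parent_add_one hcr, hcv, hdv]
  have hxc := pow_mul_sqrt_le_dist_drawing hT hf₀ hdeg hv hcv
  rw [hvx] at hxc
  have hcy := dist_drawing_add_le_of_iterate_parent_eq hT (Δ := Δ) hf₀ hf₁ hα₁ k hk
  have htri := dist_triangle_right (ρ x) (ρ c) (ρ y)
  have key : α * f ^ hT.depth r x ≤
      f ^ hT.depth r v * √(1 - 2 * f * cos (2 * π / Δ) + f ^ 2) -
        f ^ (hT.depth r c + 1) / (1 - f) :=
    calc α * f ^ hT.depth r x = f ^ hT.depth r x * α := mul_comm _ _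
      _ ≤ f ^ hT.depth r x * (f * √(1 - 2 * f * cos (2 * π / Δ) + f ^ 2) - f ^ 3 / (1 - f)) :=
          mul_le_mul_of_nonneg_left hα₂ (pow_nonneg hf₀ _)
      _ = _ := by rw [hdv, hdc]; ring
  linarith

lemma add_le_dist_drawing_of_siblings (hf₀ : 0 ≤ f) (hf₁ : f < 1)
    (hdeg : ∀ v, G.degree v ≤ Δ) (hfΔ : f / (1 - f) ≤ sin (π / Δ)) (hα : α ≤ f / (1 - f))
    {x y c₁ c₂ : V} (j k : ℕ) (hx : (hT.parent r)^[j] x = c₁) (hy : (hT.parent r)^[k] y = c₂)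
    (h₁ : c₁ ≠ r) (h₂ : c₂ ≠ r) (hne : c₁ ≠ c₂) (hp : hT.parent r c₁ = hT.parent r c₂) :
    α * f ^ hT.depth r x + α * f ^ hT.depth r y ≤ dist (ρ x) (ρ y) := by
  have hd : hT.depth r c₂ = hT.depth r c₁ := by
    have := hT.depth_parent_add_one h₂
    rw [← hp, hT.depth_parent_add_one h₁] at this
    exact this.symm
  have hc₁c₂ := two_mul_sin_mul_pow_le_dist_drawing hT (f := f) hdeg h₁ h₂ hne hp
  have hxc₁ := dist_drawing_add_le_of_iterate_parent_eq hT (Δ := Δ) hf₀ hf₁ hα j hx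
  have hyc₂ := dist_drawing_add_le_of_iterate_parent_eq hT (Δ := Δ) hf₀ hf₁ hα k hy
  rw [hd] at hyc₂
  have htri := dist_triangle4 (ρ c₁) (ρ x) (ρ y) (ρ c₂)
  have hsin : 2 * (f ^ (hT.depth r c₁ + 1) / (1 - f)) ≤ 2 * sin (π / Δ) * f ^ hT.depth r c₁ := by
    rw [pow_succ, mul_div_assoc, mul_assoc, mul_comm (f ^ _)]
    exact mul_le_mul_of_nonneg_left (mul_le_mul_of_nonneg_right hfΔ (pow_nonneg hf₀ _)) two_pos.le
  rw [dist_comm (ρ y)] at htri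
  linarith

theorem add_le_dist_drawing (hf₀ : 0 ≤ f) (hf₁ : f < 1) (hdeg : ∀ v, G.degree v ≤ Δ)
    (hfΔ : f / (1 - f) ≤ sin (π / Δ)) (hα₁ : α ≤ f / (1 + f))
    (hα₂ : α ≤ f * √(1 - 2 * f * cos (2 * π / Δ) + f ^ 2) - f ^ 3 / (1 - f))
    {x y : V} (hxy : x ≠ y) :
    α * f ^ hT.depth r x + α * f ^ hT.depth r y ≤ dist (ρ x) (ρ y) := by
  wlog hle : hT.depth r x ≤ hT.depth r y generalizing x y
  · rw [add_comm, dist_comm]; exact this hxy.symm (le_of_not_ge hle)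
  have hα : α ≤ f / (1 - f) :=
    hα₁.trans (div_le_div_of_nonneg_left hf₀ (by linarith) (by linarith))
  obtain ⟨k, hk⟩ := Nat.exists_eq_add_of_le hle
  have hdy : hT.depth r ((hT.parent r)^[k] y) = hT.depth r x := by
    rw [hT.depth_iterate_parent]; omega
  by_cases hanc : (hT.parent r)^[k] y = x
  · rcases k with _ | _ | k
    · exact absurd hanc.symm hxy
    · exact add_le_dist_drawing_of_parent_eq hT hf₀ hα₁
        (by rintro rfl; simp at hk) hanc
    · rw [Function.iterate_succ_apply', Function.iterate_succ_apply'] at hanc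
      refine add_le_dist_drawing_of_grandparent hT hf₀ hf₁ hdeg hα hα₂ k rfl rfl hanc fun h => ?_
      rw [← Function.iterate_succ_apply' (hT.parent r), ← hT.depth_eq_zero_iff,
        hT.depth_iterate_parent] at h
      omega
  · obtain ⟨j, hne, hp⟩ := hT.exists_ne_parent_eq hdy.symm (Ne.symm hanc)
    have hd : hT.depth r ((hT.parent r)^[j] x) = hT.depth r ((hT.parent r)^[j + k] y) := by
      simp only [hT.depth_iterate_parent]; omega
    rw [← Function.iterate_add_apply] at hne hp
    exact add_le_dist_drawing_of_siblings hT hf₀ hf₁ hdeg hfΔ hα j (j + k) rfl rfl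
      (hT.ne_root_of_depth_eq hd hne) (hT.ne_root_of_depth_eq hd.symm hne.symm) hne hp

lemma plyRadius_drawing_le (hα : 0 ≤ α) (hf₀ : 0 ≤ f) (hf₁ : f ≤ 1) (v : V) :
    plyRadius G ρ α v ≤ α * f ^ hT.depth r v := by
  have hnbr {w : V} (hw : G.Adj v w) : dist (ρ v) (ρ w) ≤ f ^ hT.depth r v := by
    rcases hT.parent_eq_or_parent_eq_of_adj (r := r) hw with h | h
    · have hw' : w ≠ r := by
        rintro rfl; rw [hT.parent_root] at h; exact hw.ne h.symm
      rw [dist_comm, ← h, dist_drawing_parent hT hf₀ hw', ← hT.depth_parent_add_one hw']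
      exact pow_le_pow_of_le_one hf₀ hf₁ (Nat.le_succ _)
    · have hv : v ≠ r := by
        rintro rfl; rw [hT.parent_root] at h; exact hw.ne h
      rw [← h, dist_drawing_parent hT hf₀ hv]
  exact mul_le_mul_of_nonneg_left (Real.iSup_le (fun w => hnbr w.2) (pow_nonneg hf₀ _)) hα

end TreeDrawing

theorem stmt0_general (Δ : ℕ)
    (f : ℝ) (hf : f = Real.sin (π / Δ) / (1 + Real.sin (π / Δ)))
    (α : ℝ) (hα0 : 0 < α)
    (hα : α ≤ min (f / (1 + f))
      (f * Real.sqrt (1 - 2 * f * Real.cos (2 * π / Δ) + f ^ 2) - f ^ 3 / (1 - f)))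
    (V : Type*) [Fintype V] [DecidableEq V]
    (G : SimpleGraph V) [DecidableRel G.Adj]
    (hT : G.IsTree) (hdeg : ∀ v : V, G.degree v ≤ Δ) :
    ∃ ρ : V → EuclideanSpace ℝ (Fin 2), Function.Injective ρ ∧
      Pairwise fun v w : V =>
        Disjoint (Metric.ball (ρ v) (plyRadius G ρ α v))
          (Metric.ball (ρ w) (plyRadius G ρ α w)) := by
  obtain ⟨r⟩ := hT.connected.nonempty
  have hS : 0 ≤ sin (π / Δ) := by
    rcases Nat.eq_zero_or_pos Δ with rfl | hΔ
    · simp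
    · exact sin_nonneg_of_nonneg_of_le_pi (by positivity)
        (div_le_self pi_pos.le (Nat.one_le_cast.2 hΔ))
  have hf₀ : 0 ≤ f := hf ▸ div_nonneg hS (by linarith)
  have hf₁ : f < 1 := by rw [hf, div_lt_one (by linarith)]; linarith
  have hfΔ : f / (1 - f) = sin (π / Δ) := by
    rw [hf]; field_simp; ring
  have hα₁ := hα.trans (min_le_left _ _)
  have hα₂ := hα.trans (min_le_right _ _)
  have hpos (v : V) : 0 < α * f ^ hT.depth r v := by
    refine mul_pos hα0 (pow_pos (hf₀.lt_of_ne ?_) _)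
    rintro rfl
    exact hα0.not_ge (hα₁.trans_eq (zero_div _))
  have hsep {x y : V} (hxy : x ≠ y) :=
    TreeDrawing.add_le_dist_drawing hT (r := r) hf₀ hf₁ hdeg hfΔ.le hα₁ hα₂ hxy
  refine ⟨TreeDrawing.drawing hT r Δ f, fun x y hxy => by_contra fun hne => ?_,
    fun x y hxy => Metric.ball_disjoint_ball ?_⟩
  · have := hsep hne
    rw [hxy, dist_self] at this
    linarith [hpos x, hpos y]
  · exact (add_le_add (TreeDrawing.plyRadius_drawing_le hT hα0.le hf₀ hf₁.le x)
      (TreeDrawing.plyRadius_drawing_le hT hα0.le hf₀ hf₁.le y)).trans (hsep hxy)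

/-- For `Δ ≥ 3`, `f = sin(π/Δ)/(1 + sin(π/Δ))` and
`0 < α ≤ min( f/(1+f), f·√(1 − 2f·cos(2π/Δ) + f²) − f³/(1−f) )`, every finite
tree of maximum degree at most `Δ` has a straight-line drawing whose ply disks
with parameter `α` are pairwise disjoint (a 1-ply drawing). -/
theorem stmt0 (Δ : ℕ) (hΔ : 3 ≤ Δ)
    (f : ℝ) (hf : f = Real.sin (π / Δ) / (1 + Real.sin (π / Δ)))
    (α : ℝ) (hα0 : 0 < α)
    (hα : α ≤ min (f / (1 + f))
      (f * Real.sqrt (1 - 2 * f * Real.cos (2 * π / Δ) + f ^ 2) - f ^ 3 / (1 - f)))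
    (V : Type*) [Fintype V] [DecidableEq V]
    (G : SimpleGraph V) [DecidableRel G.Adj]
    (hT : G.IsTree) (hdeg : ∀ v : V, G.degree v ≤ Δ) :
    ∃ ρ : V → EuclideanSpace ℝ (Fin 2), Function.Injective ρ ∧
      Pairwise fun v w : V =>
        Disjoint (Metric.ball (ρ v) (plyRadius G ρ α v))
          (Metric.ball (ρ w) (plyRadius G ρ α w)) :=
  stmt0_general Δ f hf α hα0 hα V G hT hdeg
end

section
/- There exists a constant c > 0 such that for every natural number Δ ≥ 3, every finite tree G with maximum degree at most Δ admits a straight-line drawing whose ply disks with parameter α = c/Δ are pairwise disjoint (i.e., a 1-ply drawing). In other words, trees of maximum degree Δ have 1-ply drawings for α = Θ(1/Δ). -/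
open Real

/-!
The vertices can all be placed on one line. Root the tree, give the children of every vertex
distinct labels `x < Δ`, and put a child of a vertex of depth `n` at distance `(1 + x / Δ) ε^(n+1)`
to the right of its parent, where `ε = 1 / (8Δ)`. Every neighbour of a vertex of depth `n` is then
within `2 εⁿ` of it, while its whole subtree lies within `εⁿ / (3Δ)` to its right; two sibling
subtrees at depth `n + 1` therefore stay at least `ε^(n+1) (1/Δ - 1/(3Δ))` apart. Consequently
vertices of depths `m` and `n` are at distance at least `ε^(min m n + 1)`, which for `α = 1 / (32Δ)`
is exactly the bound `4 α ε^(min m n)` on the sum of their ply radii.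
-/

namespace SimpleGraph

variable {V : Type*} {G : SimpleGraph V}

theorem IsAcyclic.concat_or_concat (hG : G.IsAcyclic) {u a b : V} (p : G.Path u a)
    (q : G.Path u b) (hab : G.Adj a b) :
    (q : G.Walk u b) = (p : G.Walk u a).concat hab ∨
      (p : G.Walk u a) = (q : G.Walk u b).concat hab.symm := by
  classical
  have unique {x y : V} (r s : G.Path x y) : (r : G.Walk x y) = s :=
    congrArg Subtype.val ((hG.subsingleton_path x y).elim r s)
  by_cases hb : b ∈ (p : G.Walk u a).support
  · right
    have hdrop : (p : G.Walk u a).dropUntil b hb = .cons hab.symm .nil :=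
      unique ⟨_, p.2.dropUntil hb⟩ (Path.singleton hab.symm)
    have htake : (p : G.Walk u a).takeUntil b hb = q := unique ⟨_, p.2.takeUntil hb⟩ q
    rw [← (p : G.Walk u a).take_spec hb, hdrop, htake]
    rfl
  · exact .inl (unique q ⟨_, p.2.concat hb hab⟩)

theorem Walk.eq_of_map_darts_eq {α : Type*} {ℓ : G.Dart → α}
    (hℓ : ∀ d d' : G.Dart, d.fst = d'.fst → ℓ d = ℓ d' → d = d') :
    ∀ {u v w : V} (p : G.Walk u v) (q : G.Walk u w), p.darts.map ℓ = q.darts.map ℓ → v = w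
  | _, _, _, .nil, .nil, _ => rfl
  | _, _, _, .nil, .cons _ _, h => by simp at h
  | _, _, _, .cons _ _, .nil, h => by simp at h
  | _, _, _, .cons _ p, .cons _ q, h => by
    simp only [darts_cons, List.map_cons, List.cons.injEq] at h
    obtain rfl : _ = _ := congrArg (·.snd) (hℓ _ _ (by exact rfl) h.1)
    exact eq_of_map_darts_eq hℓ p q h.2

theorem exists_dart_label {Δ : ℕ} [∀ v, Fintype (G.neighborSet v)]
    (hdeg : ∀ v, G.degree v ≤ Δ) :
    ∃ ℓ : G.Dart → Fin Δ, ∀ d d' : G.Dart, d.fst = d'.fst → ℓ d = ℓ d' → d = d' := by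
  have e (v : V) : G.neighborSet v ↪ Fin Δ := (Function.Embedding.nonempty_of_card_le <| by
    rw [Fintype.card_fin, card_neighborSet_eq_degree]; exact hdeg v).some
  refine ⟨fun d => e d.fst ⟨d.snd, d.adj⟩, ?_⟩
  rintro ⟨⟨v, w⟩, hvw⟩ ⟨⟨v', w'⟩, hvw'⟩ (rfl : v = v') hℓ
  obtain rfl : w = w' := congrArg Subtype.val ((e v).injective hℓ)
  rfl

theorem IsTree.exists_injective_address {Δ : ℕ} [∀ v, Fintype (G.neighborSet v)]
    (hG : G.IsTree) (hdeg : ∀ v, G.degree v ≤ Δ) :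
    ∃ a : V → List (Fin Δ), Function.Injective a ∧
      ∀ v w, G.Adj v w → (∃ x, a w = a v ++ [x]) ∨ ∃ x, a v = a w ++ [x] := by
  classical
  obtain ⟨ℓ, hℓ⟩ := exists_dart_label hdeg
  let r := hG.connected.nonempty.some
  let P (v : V) : G.Path r v := (hG.connected r v).some.toPath
  refine ⟨fun v => (P v : G.Walk r v).darts.map ℓ,
    fun v w h => Walk.eq_of_map_darts_eq hℓ _ _ h, fun v w hvw => ?_⟩
  dsimp only
  rcases hG.isAcyclic.concat_or_concat (P v) (P w) hvw with h | h
  · exact .inl ⟨_, by rw [h, Walk.darts_concat, List.map_concat, List.concat_eq_append]⟩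
  · exact .inr ⟨_, by rw [h, Walk.darts_concat, List.map_concat, List.concat_eq_append]⟩

end SimpleGraph

/-- `lineCoord Δ [x₁, …, xₙ] = ∑ᵢ (1 + xᵢ / Δ) / (8Δ)^i`. -/
noncomputable def lineCoord (Δ : ℕ) : List (Fin Δ) → ℝ
  | [] => 0
  | x :: a => (1 + x / Δ + lineCoord Δ a) / (8 * Δ)

section lineCoord

variable {Δ : ℕ}

theorem lineCoord_nonneg : ∀ a : List (Fin Δ), 0 ≤ lineCoord Δ a
  | [] => le_rfl
  | _ :: a => by simp only [lineCoord]; have := lineCoord_nonneg a; positivity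

theorem lineCoord_le_one_div : ∀ a : List (Fin Δ), lineCoord Δ a ≤ 1 / (3 * Δ)
  | [] => by simp [lineCoord]
  | x :: a => by
    have hΔ : (1 : ℝ) ≤ Δ := by exact_mod_cast x.pos
    have hx : (x : ℝ) / Δ ≤ 1 := div_le_one_of_le₀ (by exact_mod_cast x.is_le') (by positivity)
    have ha : lineCoord Δ a * (3 * Δ) ≤ 1 :=
      (le_div_iff₀ (by positivity)).mp (lineCoord_le_one_div a)
    rw [lineCoord, div_le_div_iff₀ (by positivity) (by positivity)]
    nlinarith

theorem one_div_le_lineCoord_cons (x : Fin Δ) (a : List (Fin Δ)) :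
    1 / (8 * Δ) ≤ lineCoord Δ (x :: a) := by
  have := lineCoord_nonneg a
  rw [lineCoord]
  gcongr
  linarith [show (0 : ℝ) ≤ x / Δ by positivity]

theorem lineCoord_append_singleton (x : Fin Δ) :
    ∀ a : List (Fin Δ), lineCoord Δ (a ++ [x]) =
      lineCoord Δ a + (1 + x / Δ) / (8 * Δ) ^ (a.length + 1)
  | [] => by simp [lineCoord]
  | y :: a => by
    have : (Δ : ℝ) ≠ 0 := by have := y.pos; positivity
    simp only [List.cons_append, lineCoord, lineCoord_append_singleton x a, List.length_cons,
      pow_succ]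
    field_simp
    ring

theorem dist_lineCoord_append_singleton_le (a : List (Fin Δ)) (x : Fin Δ) :
    dist (lineCoord Δ (a ++ [x])) (lineCoord Δ a) ≤ 2 / (8 * Δ) ^ (a.length + 1) := by
  have hx : (x : ℝ) / Δ ≤ 1 := div_le_one_of_le₀ (by exact_mod_cast x.is_le') (by positivity)
  rw [lineCoord_append_singleton, Real.dist_eq, add_sub_cancel_left, abs_of_nonneg (by positivity)]
  gcongr
  linarith

theorem dist_lineCoord_cons_cons (x y : Fin Δ) (a b : List (Fin Δ)) :
    dist (lineCoord Δ (x :: a)) (lineCoord Δ (y :: b)) =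
      |(x - y : ℝ) / Δ - (lineCoord Δ b - lineCoord Δ a)| / (8 * Δ) := by
  have : (0 : ℝ) < Δ := by have := x.pos; positivity
  rw [Real.dist_eq, lineCoord, lineCoord, ← sub_div, abs_div,
    abs_of_pos (by positivity : (0 : ℝ) < 8 * Δ)]
  congr 2
  ring

/-- Distinct first labels shift two words apart by at least `1 / Δ` before rescaling, while the
remaining letters contribute at most `1 / (3Δ)`. -/
theorem one_div_pow_le_dist_lineCoord :
    ∀ {a b : List (Fin Δ)}, a ≠ b →
      1 / (8 * Δ) ^ (min a.length b.length + 1) ≤ dist (lineCoord Δ a) (lineCoord Δ b)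
  | [], [], h => absurd rfl h
  | [], y :: b, _ => by
    rw [lineCoord, Real.dist_eq, zero_sub, abs_neg, abs_of_nonneg (lineCoord_nonneg _)]
    simpa using one_div_le_lineCoord_cons y b
  | x :: a, [], _ => by
    rw [dist_comm, lineCoord, Real.dist_eq, zero_sub, abs_neg, abs_of_nonneg (lineCoord_nonneg _)]
    simpa using one_div_le_lineCoord_cons x a
  | x :: a, y :: b, h => by
    have hΔ : (1 : ℝ) ≤ Δ := by exact_mod_cast x.pos
    rw [dist_lineCoord_cons_cons, List.length_cons, List.length_cons, Nat.succ_min_succ, pow_succ,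
      ← div_div, div_le_div_iff_of_pos_right (by positivity)]
    by_cases hxy : x = y
    · subst hxy
      have hab : a ≠ b := fun hab => h (hab ▸ rfl)
      simpa [abs_sub_comm, Real.dist_eq] using one_div_pow_le_dist_lineCoord hab
    · have hgap : 1 ≤ |(x - y : ℝ)| := by
        have : ((x : ℕ) : ℤ) - y ≠ 0 := sub_ne_zero.mpr (by exact_mod_cast Fin.val_ne_of_ne hxy)
        exact_mod_cast Int.one_le_abs this
      have hba : |lineCoord Δ b - lineCoord Δ a| ≤ 1 / (3 * Δ) :=
        abs_sub_le_of_nonneg_of_le (lineCoord_nonneg b) (lineCoord_le_one_div b)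
          (lineCoord_nonneg a) (lineCoord_le_one_div a)
      calc (1 : ℝ) / (8 * Δ) ^ (min a.length b.length + 1)
          ≤ 1 / (8 * Δ) :=
            one_div_le_one_div_of_le (by positivity) (le_self_pow₀ (by linarith) (by omega))
        _ ≤ 1 / Δ - 1 / (3 * Δ) := by
            rw [div_sub_div _ _ (by positivity) (by positivity),
              div_le_div_iff₀ (by positivity) (by positivity)]
            nlinarith
        _ ≤ |(x - y : ℝ) / Δ| - |lineCoord Δ b - lineCoord Δ a| := by
            rw [abs_div, abs_of_pos (by positivity : (0 : ℝ) < Δ)]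
            gcongr
        _ ≤ _ := abs_sub_abs_le_abs_sub _ _

end lineCoord

theorem plyRadius_le {V : Type*} (G : SimpleGraph V) (ρ : V → EuclideanSpace ℝ (Fin 2))
    {α B : ℝ} (hα : 0 ≤ α) (hB : 0 ≤ B) (v : V) (h : ∀ w, G.Adj v w → dist (ρ v) (ρ w) ≤ B) :
    plyRadius G ρ α v ≤ α * B :=
  mul_le_mul_of_nonneg_left (Real.iSup_le (fun w => h w w.2) hB) hα

section lineDrawing

variable {V : Type*} {Δ : ℕ} (a : V → List (Fin Δ))

noncomputable def lineDrawing (v : V) : EuclideanSpace ℝ (Fin 2) :=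
  EuclideanSpace.single 0 (lineCoord Δ (a v))

theorem dist_lineDrawing (v w : V) :
    dist (lineDrawing a v) (lineDrawing a w) = dist (lineCoord Δ (a v)) (lineCoord Δ (a w)) :=
  PiLp.dist_single_same _ _ _ _ _

variable {a}

theorem lineDrawing_injective (hΔ : 0 < Δ) (ha : Function.Injective a) :
    Function.Injective (lineDrawing a) := by
  intro v w hvw
  by_contra hne
  have hsep := one_div_pow_le_dist_lineCoord (ha.ne hne)
  rw [← dist_lineDrawing, hvw, dist_self] at hsep
  exact absurd hsep (not_le.mpr (by positivity))

theorem plyRadius_lineDrawing_le {G : SimpleGraph V} (hΔ : 0 < Δ)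
    (hadj : ∀ v w, G.Adj v w → (∃ x, a w = a v ++ [x]) ∨ ∃ x, a v = a w ++ [x])
    {α : ℝ} (hα : 0 ≤ α) (v : V) :
    plyRadius G (lineDrawing a) α v ≤ α * (2 / (8 * Δ) ^ (a v).length) := by
  have h8Δ : (1 : ℝ) ≤ 8 * Δ := by
    have : (1 : ℝ) ≤ Δ := by exact_mod_cast hΔ
    linarith
  refine plyRadius_le G _ hα (by positivity) v fun w hvw => ?_
  rw [dist_lineDrawing]
  rcases hadj v w hvw with ⟨x, hw⟩ | ⟨x, hv⟩
  · rw [hw, dist_comm]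
    refine (dist_lineCoord_append_singleton_le _ x).trans ?_
    exact div_le_div_of_nonneg_left zero_le_two (by positivity) (pow_le_pow_right₀ h8Δ (by omega))
  · rw [hv, List.length_append, List.length_singleton]
    exact dist_lineCoord_append_singleton_le _ x

theorem disjoint_ball_lineDrawing {G : SimpleGraph V} (hΔ : 0 < Δ) (ha : Function.Injective a)
    (hadj : ∀ v w, G.Adj v w → (∃ x, a w = a v ++ [x]) ∨ ∃ x, a v = a w ++ [x])
    {v w : V} (hvw : v ≠ w) :
    Disjoint (Metric.ball (lineDrawing a v) (plyRadius G (lineDrawing a) (1 / 32 / Δ) v))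
      (Metric.ball (lineDrawing a w) (plyRadius G (lineDrawing a) (1 / 32 / Δ) w)) := by
  have h8Δ : (1 : ℝ) ≤ 8 * Δ := by
    have : (1 : ℝ) ≤ Δ := by exact_mod_cast hΔ
    linarith
  set m := min (a v).length (a w).length
  have hrv := plyRadius_lineDrawing_le hΔ hadj (α := 1 / 32 / Δ) (by positivity) v
  have hrw := plyRadius_lineDrawing_le hΔ hadj (α := 1 / 32 / Δ) (by positivity) w
  have hsep := one_div_pow_le_dist_lineCoord (ha.ne hvw)
  refine Metric.ball_disjoint_ball ?_
  rw [dist_lineDrawing]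
  refine le_trans ?_ hsep
  calc _ ≤ (1 : ℝ) / 32 / Δ * (2 / (8 * Δ) ^ m) + 1 / 32 / Δ * (2 / (8 * Δ) ^ m) := by
        gcongr
        · exact hrv.trans (by gcongr; exact min_le_left _ _)
        · exact hrw.trans (by gcongr; exact min_le_right _ _)
    _ = 1 / (8 * Δ) ^ (m + 1) := by
        have : (Δ : ℝ) ≠ 0 := by positivity
        field_simp
        ring

end lineDrawing

/-- There is a constant `c > 0` such that for every `Δ ≥ 3`,
every finite tree of maximum degree at most `Δ` has a straight-line drawing
whose ply disks with parameter `α = c/Δ` are pairwise disjoint: trees of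
maximum degree `Δ` have 1-ply drawings for `α = Θ(1/Δ)`. -/
theorem stmt1 :
    ∃ c : ℝ, 0 < c ∧
      ∀ (Δ : ℕ), 3 ≤ Δ →
        ∀ (V : Type) [Fintype V] [DecidableEq V]
          (G : SimpleGraph V) [DecidableRel G.Adj],
          G.IsTree → (∀ v : V, G.degree v ≤ Δ) →
          ∃ ρ : V → EuclideanSpace ℝ (Fin 2), Function.Injective ρ ∧
            Pairwise fun v w : V =>
              Disjoint (Metric.ball (ρ v) (plyRadius G ρ (c / Δ) v))
                (Metric.ball (ρ w) (plyRadius G ρ (c / Δ) w)) := by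
  refine ⟨1 / 32, by norm_num, fun Δ hΔ V _ _ G _ hG hdeg => ?_⟩
  have hΔ : 0 < Δ := by omega
  obtain ⟨a, ha, hadj⟩ := hG.exists_injective_address hdeg
  exact ⟨lineDrawing a, lineDrawing_injective hΔ ha,
    fun v w hvw => disjoint_ball_lineDrawing hΔ ha hadj hvw⟩
end

section
/- There exists a constant C > 0 such that for every natural number Δ ≥ 2 and every finite tree G on n ≥ 2 vertices with maximum degree at most Δ, there is a straight-line drawing ρ of G such that: (1) for every point q ∈ ℝ², the number of vertices whose ply disk with parameter α = 1/2 contains q is at most C·(log n + 1); and (2) the ratio of the longest edge length max over edges uv of dist(ρ(u), ρ(v)) to the shortest edge length is at most n^(C·Δ). In particular, every tree has a drawing with ply number O(log n) for α = 1/2, in area n^{O(Δ)} for bounded degree. -/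
/-!
The drawing lies on a line. Split the tree at a centroid `c`, so that every branch at a
neighbour of `c` has at most half of the `n` vertices, draw the branches recursively, and
translate the branch at the `i`-th neighbour so that this neighbour sits at `s * 4 ^ (i + 1)`,
where `s = (n / 2) ^ (2Δ + 1)` bounds the spread of the recursive drawings. A point of the line
is then covered by the disk of `c`, by the disk of at most one neighbour of `c`, and by disks of
a single branch, so the ply grows by at most `2` per halving and is at most `2 log₂ n`. Edges
keep length at least `1`, and the drawing spans at most `(4 ^ Δ + 1) s ≤ n ^ (2Δ + 1)`.
-/

open Real

open SimpleGraph

namespace TreeDrawing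

section TreePath

variable {V : Type*} {G : SimpleGraph V} (hG : G.IsTree)

noncomputable def treePath (u v : V) : G.Walk u v :=
  (hG.existsUnique_path u v).exists.choose

lemma isPath_treePath (u v : V) : (treePath hG u v).IsPath :=
  (hG.existsUnique_path u v).exists.choose_spec

lemma eq_treePath {u v : V} {p : G.Walk u v} (hp : p.IsPath) : p = treePath hG u v :=
  (hG.existsUnique_path u v).unique hp (isPath_treePath hG u v)

lemma treePath_self (u : V) : treePath hG u u = Walk.nil :=
  (eq_treePath hG Walk.IsPath.nil).symm

lemma treePath_of_adj {u v : V} (h : G.Adj u v) : treePath hG u v = Walk.cons h Walk.nil :=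
  (eq_treePath hG (by simp [h.ne])).symm

lemma treePath_eq_cons {c u v : V} (h : G.Adj c u) (hc : c ∉ (treePath hG u v).support) :
    treePath hG c v = Walk.cons h (treePath hG u v) :=
  (eq_treePath hG ((Walk.cons_isPath_iff _ _).2 ⟨isPath_treePath hG u v, hc⟩)).symm

lemma getVert_one_treePath {c u v : V} (h : G.Adj c u) (hc : c ∉ (treePath hG u v).support) :
    (treePath hG c v).getVert 1 = u := by
  rw [treePath_eq_cons hG h hc, Walk.getVert_cons_succ, Walk.getVert_zero]

lemma mem_support_treePath_comm {u v z : V} :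
    z ∈ (treePath hG v u).support ↔ z ∈ (treePath hG u v).support := by
  rw [← eq_treePath hG (isPath_treePath hG u v).reverse, Walk.support_reverse, List.mem_reverse]

lemma length_treePath_comm (u v : V) : (treePath hG v u).length = (treePath hG u v).length := by
  rw [← eq_treePath hG (isPath_treePath hG u v).reverse, Walk.length_reverse]

def IsSubtree (A : Finset V) : Prop :=
  ∀ u ∈ A, ∀ v ∈ A, ∀ z ∈ (treePath hG u v).support, z ∈ A

variable [DecidableEq V]

lemma mem_support_treePath_or {u v w z : V} (hz : z ∈ (treePath hG v w).support) :
    z ∈ (treePath hG v u).support ∨ z ∈ (treePath hG u w).support := by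
  let W := (treePath hG v u).append (treePath hG u w)
  rw [← eq_treePath hG W.toPath.2] at hz
  exact (Walk.mem_support_append_iff _ _).1 (Walk.support_toPath_subset_support W hz)

lemma support_treePath_subset {u v z : V} (hz : z ∈ (treePath hG u v).support) :
    (treePath hG u z).support ⊆ (treePath hG u v).support := by
  rw [← eq_treePath hG ((isPath_treePath hG u v).takeUntil hz)]
  exact Walk.support_takeUntil_subset_support _ hz

lemma length_treePath_add {u v z : V} (hz : z ∈ (treePath hG u v).support) :
    (treePath hG u z).length + (treePath hG z v).length = (treePath hG u v).length := by
  rw [← eq_treePath hG ((isPath_treePath hG u v).takeUntil hz),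
    ← eq_treePath hG ((isPath_treePath hG u v).dropUntil hz), ← Walk.length_append,
    Walk.take_spec]

/-- The vertices of `A` reached from `u` without passing through `c`; for `u` adjacent to `c`
this is the component of `u` in `A \ {c}` when `A` is a subtree. -/
noncomputable def branch (A : Finset V) (c u : V) : Finset V :=
  A.filter fun v => c ∉ (treePath hG u v).support

variable {hG} {A : Finset V} {c u v : V}

lemma mem_branch : v ∈ branch hG A c u ↔ v ∈ A ∧ c ∉ (treePath hG u v).support := by
  simp [branch]

lemma branch_subset : branch hG A c u ⊆ A :=
  Finset.filter_subset _ A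

lemma ne_of_mem_branch (hv : v ∈ branch hG A c u) : v ≠ c := by
  rintro rfl
  exact (mem_branch.1 hv).2 (Walk.end_mem_support _)

lemma self_mem_branch (hu : u ∈ A) (h : G.Adj c u) : u ∈ branch hG A c u :=
  mem_branch.2 ⟨hu, by simp [treePath_self, h.ne]⟩

lemma eq_of_mem_branch_of_mem_branch {u' : V} (hu : G.Adj c u) (hu' : G.Adj c u')
    (hv : v ∈ branch hG A c u) (hv' : v ∈ branch hG A c u') : u = u' := by
  rw [← getVert_one_treePath hG hu (mem_branch.1 hv).2,
    getVert_one_treePath hG hu' (mem_branch.1 hv').2]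

lemma eq_of_adj_of_mem_branch (hu : G.Adj c u) (hv : v ∈ branch hG A c u) (h : G.Adj c v) :
    v = u := by
  simpa [treePath_of_adj hG h] using getVert_one_treePath hG hu (mem_branch.1 hv).2

lemma mem_branch_of_adj {w : V} (hv : v ∈ branch hG A c u) (hw : w ∈ A) (hwc : w ≠ c)
    (h : G.Adj v w) : w ∈ branch hG A c u := by
  refine mem_branch.2 ⟨hw, fun hc => ?_⟩
  rcases mem_support_treePath_or hG (u := v) hc with hc | hc
  · exact (mem_branch.1 hv).2 hc
  · simp only [treePath_of_adj hG h, Walk.support_cons, Walk.support_nil, List.mem_cons,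
      List.not_mem_nil, or_false] at hc
    rcases hc with rfl | rfl
    exacts [ne_of_mem_branch hv rfl, hwc rfl]

lemma exists_mem_branch (hA : IsSubtree hG A) (hc : c ∈ A) (hv : v ∈ A)
    (hvc : v ≠ c) : ∃ u ∈ A, G.Adj c u ∧ v ∈ branch hG A c u := by
  obtain ⟨u, h, q, hq⟩ := Walk.exists_eq_cons_of_ne (Ne.symm hvc) (treePath hG c v)
  have hpath := isPath_treePath hG c v
  rw [hq, Walk.cons_isPath_iff] at hpath
  have hu : u ∈ A := hA c hc v hv u (by simp [hq])
  refine ⟨u, hu, h, mem_branch.2 ⟨hv, ?_⟩⟩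
  rw [← eq_treePath hG hpath.1]
  exact hpath.2

lemma isSubtree_branch (hA : IsSubtree hG A) :
    IsSubtree hG (branch hG A c u) := by
  intro v hv w hw z hz
  obtain ⟨hvA, hcv⟩ := mem_branch.1 hv
  obtain ⟨hwA, hcw⟩ := mem_branch.1 hw
  refine mem_branch.2 ⟨hA v hvA w hwA z hz, fun hcz => ?_⟩
  rcases mem_support_treePath_or hG (u := u) hz with h | h
  · rw [mem_support_treePath_comm] at h
    exact hcv (support_treePath_subset hG h hcz)
  · exact hcw (support_treePath_subset hG h hcz)

lemma branch_eq_sdiff_branch (h : G.Adj c u) :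
    branch hG A u c = A \ branch hG A c u := by
  ext v
  rw [Finset.mem_sdiff, mem_branch, mem_branch]
  by_cases hv : v ∈ A
  · simp only [hv, true_and, not_not]
    refine ⟨fun hu => ?_, fun hc hu => ?_⟩
    · by_contra hcv
      exact hu (by simp [treePath_eq_cons hG h hcv])
    · have h1 := length_treePath_add hG hc
      have h2 := length_treePath_add hG hu
      rw [length_treePath_comm hG c u] at h1
      simp only [treePath_of_adj hG h, Walk.length_cons, Walk.length_nil] at h1 h2
      omega
  · simp [hv]

lemma card_branch_lt_card_branch (hu : u ∈ A) (h : G.Adj c u)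
    (hbig : A.card < 2 * (branch hG A c u).card) {w : V} (huw : G.Adj u w) :
    (branch hG A u w).card < (branch hG A c u).card := by
  by_cases hwc : w = c
  · subst hwc
    have hle := Finset.card_le_card (branch_subset (hG := hG) (A := A) (c := w) (u := u))
    rw [branch_eq_sdiff_branch h, Finset.card_sdiff_of_subset branch_subset]
    omega
  · have hsub : branch hG A u w ⊆ (branch hG A c u).erase u := by
      intro v hv
      have hvc : v ∉ branch hG A u c := fun hv' =>
        hwc (eq_of_mem_branch_of_mem_branch huw h.symm hv hv')
      rw [branch_eq_sdiff_branch h, Finset.mem_sdiff, not_and, not_not] at hvc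
      exact Finset.mem_erase.2 ⟨ne_of_mem_branch hv, hvc (mem_branch.1 hv).1⟩
    calc (branch hG A u w).card ≤ ((branch hG A c u).erase u).card := Finset.card_le_card hsub
      _ < (branch hG A c u).card := Finset.card_erase_lt_of_mem (self_mem_branch hu h)

/-- A vertex minimising the size of its largest branch is a centroid. -/
lemma exists_centroid [DecidableRel G.Adj] (hne : A.Nonempty) :
    ∃ c ∈ A, ∀ u ∈ A, G.Adj c u → 2 * (branch hG A c u).card ≤ A.card := by
  let m : V → ℕ := fun c => (A.filter (G.Adj c)).sup fun u => (branch hG A c u).card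
  obtain ⟨c, hc, hmin⟩ := Finset.exists_min_image A m hne
  refine ⟨c, hc, fun u hu h => ?_⟩
  by_contra! hbig
  have hmu : m u < (branch hG A c u).card := by
    refine (Finset.sup_lt_iff (by rw [Nat.bot_eq_zero]; omega)).2 fun w hw => ?_
    exact card_branch_lt_card_branch hu h hbig (Finset.mem_filter.1 hw).2
  have hmc : (branch hG A c u).card ≤ m c :=
    Finset.le_sup (f := fun u => (branch hG A c u).card) (Finset.mem_filter.2 ⟨hu, h⟩)
  have := hmin u hu
  omega

end TreePath

section StarDecomposition

variable {V : Type*} {G : SimpleGraph V}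

structure IsStarDecomposition (G : SimpleGraph V) (A : Finset V) (c : V) (D : Finset V)
    (B : V → Finset V) : Prop where
  center_mem : c ∈ A
  adj_center : ∀ u ∈ D, G.Adj c u
  self_mem : ∀ u ∈ D, u ∈ B u
  subset : ∀ u ∈ D, B u ⊆ A
  center_not_mem : ∀ u ∈ D, c ∉ B u
  exists_mem : ∀ v ∈ A, v ≠ c → ∃ u ∈ D, v ∈ B u
  pairwiseDisjoint : (D : Set V).PairwiseDisjoint B
  adj_mem : ∀ u ∈ D, ∀ v ∈ B u, ∀ w ∈ A, G.Adj v w → w ∈ B u ∨ (v = u ∧ w = c)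

namespace IsStarDecomposition

variable {A D : Finset V} {c : V} {B : V → Finset V} (hS : IsStarDecomposition G A c D B)
include hS

lemma ssubset {u : V} (hu : u ∈ D) : B u ⊂ A :=
  Finset.ssubset_iff_subset_ne.2
    ⟨hS.subset u hu, fun h => hS.center_not_mem u hu (h ▸ hS.center_mem)⟩

lemma subset_neighborFinset [Fintype (G.neighborSet c)] : D ⊆ G.neighborFinset c :=
  fun u hu => (G.mem_neighborFinset c u).2 (hS.adj_center u hu)

end IsStarDecomposition

lemma exists_isStarDecomposition [DecidableEq V] [DecidableRel G.Adj] (hG : G.IsTree)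
    {A : Finset V} (hA : IsSubtree hG A) (hne : A.Nonempty) :
    ∃ c D B, IsStarDecomposition G A c D B ∧
      ∀ u ∈ D, IsSubtree hG (B u) ∧ 2 * (B u).card ≤ A.card := by
  obtain ⟨c, hc, hcent⟩ := exists_centroid (hG := hG) hne
  refine ⟨c, A.filter (G.Adj c), branch hG A c, ⟨hc, fun u hu => (Finset.mem_filter.1 hu).2,
    fun u hu => self_mem_branch (Finset.mem_filter.1 hu).1 (Finset.mem_filter.1 hu).2,
    fun _ _ => branch_subset, fun _ _ h => ne_of_mem_branch h rfl, fun v hv hvc => ?_,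
    fun u hu u' hu' huu' => ?_, fun u hu v hv w hw h => ?_⟩,
    fun u hu => ⟨isSubtree_branch hA,
      hcent u (Finset.mem_filter.1 hu).1 (Finset.mem_filter.1 hu).2⟩⟩
  · obtain ⟨u, hu, hcu, hvu⟩ := exists_mem_branch hA hc hv hvc
    exact ⟨u, Finset.mem_filter.2 ⟨hu, hcu⟩, hvu⟩
  · exact Finset.disjoint_left.2 fun v hv hv' => huu' (eq_of_mem_branch_of_mem_branch
      (Finset.mem_filter.1 hu).2 (Finset.mem_filter.1 hu').2 hv hv')
  · by_cases hwc : w = c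
    · subst hwc
      exact Or.inr ⟨eq_of_adj_of_mem_branch (Finset.mem_filter.1 hu).2 hv h.symm, rfl⟩
    · exact Or.inl (mem_branch_of_adj hv hw hwc h)

end StarDecomposition

section LineDrawing

variable {V : Type*} {G : SimpleGraph V}

/-- The vertices of `A` whose ply disk with `α = 1/2` in the drawing `x` on a line contains `t`:
`t` is closer to `x v` than half the length of some edge at `v`. -/
def plySet (G : SimpleGraph V) (A : Finset V) (x : V → ℝ) (t : ℝ) : Set V :=
  {v | v ∈ A ∧ ∃ w ∈ A, G.Adj v w ∧ 2 * |t - x v| < |x v - x w|}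

structure IsLineDrawing (G : SimpleGraph V) (A : Finset V) (k : ℕ) (x : V → ℝ) : Prop where
  injOn : Set.InjOn x A
  abs_sub_le : ∀ v ∈ A, ∀ w ∈ A, |x v - x w| ≤ (A.card : ℝ) ^ k
  one_le_abs_sub : ∀ v ∈ A, ∀ w ∈ A, G.Adj v w → 1 ≤ |x v - x w|
  ncard_plySet_le : ∀ t, (plySet G A x t).ncard ≤ 2 * Nat.log 2 A.card

lemma finite_plySet (A : Finset V) (x : V → ℝ) (t : ℝ) : (plySet G A x t).Finite :=
  A.finite_toSet.subset fun _ hv => hv.1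

lemma isLineDrawing_of_card_eq_one {A : Finset V} (hA : A.card = 1) (k : ℕ) (x : V → ℝ) :
    IsLineDrawing G A k x := by
  obtain ⟨a, rfl⟩ := Finset.card_eq_one.1 hA
  have hadj : ∀ v ∈ ({a} : Finset V), ∀ w ∈ ({a} : Finset V), ¬G.Adj v w := by
    simp only [Finset.mem_singleton]
    rintro v rfl w rfl
    exact G.irrefl
  have hply : ∀ t, plySet G {a} x t = ∅ := fun t =>
    Set.eq_empty_of_forall_notMem fun v ⟨hv, w, hw, h, _⟩ => hadj v hv w hw h
  exact ⟨by simp, by simp, fun v hv w hw h => (hadj v hv w hw h).elim, by simp [hply]⟩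

lemma exists_eq_of_pairwiseDisjoint {ι α β : Type*} {D : Finset ι} {B : ι → Finset α}
    (hB : (D : Set ι).PairwiseDisjoint B) (f : ι → α → β) (b : β) :
    ∃ X : α → β, (∀ a, (∀ i ∈ D, a ∉ B i) → X a = b) ∧ ∀ i ∈ D, ∀ a ∈ B i, X a = f i a := by
  classical
  refine ⟨fun a => if h : ∃ i ∈ D, a ∈ B i then f h.choose a else b,
    fun a ha => dif_neg (by simpa using ha), fun i hi a ha => ?_⟩
  have h : ∃ i ∈ D, a ∈ B i := ⟨i, hi, ha⟩
  obtain ⟨hi', ha'⟩ := h.choose_spec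
  simp only [dif_pos h]
  rw [hB.elim hi' hi (Finset.not_disjoint_iff.2 ⟨a, ha', ha⟩)]

lemma exists_injOn_lt_card {α : Type*} (D : Finset α) :
    ∃ idx : α → ℕ, Set.InjOn idx D ∧ ∀ u ∈ D, idx u < D.card := by
  classical
  refine ⟨fun u => if h : u ∈ D then D.equivFin ⟨u, h⟩ else 0, fun u hu u' hu' h => ?_,
    fun u hu => by simp [dif_pos hu]⟩
  rw [Finset.mem_coe] at hu hu'
  simp only [dif_pos hu, dif_pos hu'] at h
  exact congrArg Subtype.val (D.equivFin.injective (Fin.ext h))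

lemma offset_add_lt_offset_sub {s : ℝ} (hs : 0 < s) {i j : ℕ} (hij : i < j) :
    s * 4 ^ (i + 1) + s < s * 4 ^ (j + 1) - s := by
  have h4 : (4 : ℝ) * 4 ^ (i + 1) ≤ 4 ^ (j + 1) := by
    rw [← pow_succ']
    exact pow_le_pow_right₀ (by norm_num) (by omega)
  have h1 : (4 : ℝ) ≤ 4 ^ (i + 1) := le_self_pow₀ (by norm_num) (by omega)
  nlinarith

lemma eq_of_two_mul_abs_sub_offset_lt {s t : ℝ} (hs : 0 < s) {i j : ℕ}
    (hi : 2 * |t - s * 4 ^ (i + 1)| < s * 4 ^ (i + 1))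
    (hj : 2 * |t - s * 4 ^ (j + 1)| < s * 4 ^ (j + 1)) : i = j := by
  wlog hij : i < j generalizing i j
  · rcases Nat.lt_or_ge j i with h | h
    · exact (this hj hi h).symm
    · omega
  have h4 : (4 : ℝ) * 4 ^ (i + 1) ≤ 4 ^ (j + 1) := by
    rw [← pow_succ']
    exact pow_le_pow_right₀ (by norm_num) (by omega)
  have hs4 := mul_le_mul_of_nonneg_left h4 hs.le
  have hpos : 0 < s * 4 ^ (i + 1) := by positivity
  linarith [le_abs_self (t - s * 4 ^ (i + 1)), neg_abs_le (t - s * 4 ^ (j + 1))]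

lemma four_mul_le_offset {s : ℝ} (hs : 0 ≤ s) (i : ℕ) : 4 * s ≤ s * 4 ^ (i + 1) := by
  have : (4 : ℝ) ≤ 4 ^ (i + 1) := le_self_pow₀ (by norm_num) (by omega)
  nlinarith

section Glue

variable {A D : Finset V} {c : V} {B : V → Finset V} {idx : V → ℕ} {s : ℝ} {y : V → V → ℝ}
  {X : V → ℝ}

lemma sub_eq_sub_of_mem_block
    (hX : ∀ u ∈ D, ∀ v ∈ B u, X v = s * 4 ^ (idx u + 1) + (y u v - y u u))
    {u v w : V} (hu : u ∈ D) (hv : v ∈ B u) (hw : w ∈ B u) : X v - X w = y u v - y u w := by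
  rw [hX u hu v hv, hX u hu w hw]
  ring

variable (hS : IsStarDecomposition G A c D B)
  (hX : ∀ u ∈ D, ∀ v ∈ B u, X v = s * 4 ^ (idx u + 1) + (y u v - y u u))
include hS hX

lemma eq_offset {u : V} (hu : u ∈ D) : X u = s * 4 ^ (idx u + 1) := by
  rw [hX u hu u (hS.self_mem u hu)]
  ring

lemma mem_plySet_block {t : ℝ} {u v : V} (hu : u ∈ D) (hv : v ∈ B u) (hvu : v ≠ u)
    (hT : v ∈ plySet G A X t) : v ∈ plySet G (B u) (y u) (t - s * 4 ^ (idx u + 1) + y u u) := by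
  obtain ⟨-, w, hw, h, hlt⟩ := hT
  obtain hwu | ⟨hvu', -⟩ := hS.adj_mem u hu v hv w hw h
  · refine ⟨hv, w, hwu, h, ?_⟩
    rwa [← sub_eq_sub_of_mem_block hX hu hv hwu,
      show t - s * 4 ^ (idx u + 1) + y u u - y u v = t - X v by rw [hX u hu v hv]; ring]
  · exact absurd hvu' hvu

lemma one_le_abs_sub_of_adj (hXc : X c = 0) (hs : 1 ≤ s)
    (hy₁ : ∀ u ∈ D, ∀ v ∈ B u, ∀ w ∈ B u, G.Adj v w → 1 ≤ |y u v - y u w|)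
    {v w : V} (hv : v ∈ A) (hw : w ∈ A) (h : G.Adj v w) : 1 ≤ |X v - X w| := by
  have hcenter : ∀ u ∈ D, 1 ≤ |X u - X c| := fun u hu => by
    rw [eq_offset hS hX hu, hXc, sub_zero, abs_of_pos (by positivity)]
    linarith [four_mul_le_offset (zero_le_one.trans hs) (idx u)]
  rcases eq_or_ne v c with rfl | hvc
  · obtain ⟨u, hu, hwu⟩ := hS.exists_mem w hw h.ne.symm
    obtain hcu | ⟨rfl, -⟩ := hS.adj_mem u hu w hwu v hv h.symm
    · exact absurd hcu (hS.center_not_mem u hu)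
    · rw [abs_sub_comm]
      exact hcenter w hu
  · obtain ⟨u, hu, hvu⟩ := hS.exists_mem v hv hvc
    obtain hwu | ⟨rfl, rfl⟩ := hS.adj_mem u hu v hvu w hw h
    · rw [sub_eq_sub_of_mem_block hX hu hvu hwu]
      exact hy₁ u hu v hvu w hwu h
    · exact hcenter v hu

variable (hy : ∀ u ∈ D, ∀ v ∈ B u, ∀ w ∈ B u, |y u v - y u w| ≤ s)
include hy

lemma abs_sub_offset_le {u v : V} (hu : u ∈ D) (hv : v ∈ B u) :
    |X v - s * 4 ^ (idx u + 1)| ≤ s := by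
  rw [hX u hu v hv, add_sub_cancel_left]
  exact hy u hu v hv u (hS.self_mem u hu)

lemma lt_of_idx_lt (hs : 0 < s) {u u' v w : V} (hu : u ∈ D) (hu' : u' ∈ D)
    (hlt : idx u < idx u') (hv : v ∈ B u) (hw : w ∈ B u') : X v < X w := by
  have h1 := abs_le.1 (abs_sub_offset_le hS hX hy hu hv)
  have h2 := abs_le.1 (abs_sub_offset_le hS hX hy hu' hw)
  linarith [offset_add_lt_offset_sub hs hlt]

lemma mem_Icc_of_mem (hXc : X c = 0) (hs : 0 ≤ s) {Δ : ℕ} (hidx : ∀ u ∈ D, idx u < Δ) {v : V}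
    (hv : v ∈ A) : X v ∈ Set.Icc 0 ((4 ^ Δ + 1) * s) := by
  rcases eq_or_ne v c with rfl | hvc
  · rw [hXc]
    exact ⟨le_rfl, by positivity⟩
  obtain ⟨u, hu, hvu⟩ := hS.exists_mem v hv hvc
  have h1 := abs_le.1 (abs_sub_offset_le hS hX hy hu hvu)
  have h2 : s * 4 ^ (idx u + 1) ≤ s * 4 ^ Δ :=
    mul_le_mul_of_nonneg_left (pow_le_pow_right₀ (by norm_num) (hidx u hu)) hs
  have h3 := four_mul_le_offset hs (idx u)
  constructor <;> linarith

lemma abs_sub_le_of_mem (hXc : X c = 0) (hs : 0 ≤ s) {Δ : ℕ} (hidx : ∀ u ∈ D, idx u < Δ)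
    {v w : V} (hv : v ∈ A) (hw : w ∈ A) : |X v - X w| ≤ (4 ^ Δ + 1) * s := by
  obtain ⟨hv₀, hv₁⟩ := mem_Icc_of_mem hS hX hy hXc hs hidx hv
  obtain ⟨hw₀, hw₁⟩ := mem_Icc_of_mem hS hX hy hXc hs hidx hw
  exact abs_sub_le_of_nonneg_of_le hv₀ hv₁ hw₀ hw₁

lemma injOn_of_injOn_block (hXc : X c = 0) (hs : 0 < s) (hidx : Set.InjOn idx D)
    (hinj : ∀ u ∈ D, Set.InjOn (y u) (B u)) : Set.InjOn X A := by
  have hpos : ∀ v ∈ A, v ≠ c → 0 < X v := fun v hv hvc => by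
    obtain ⟨u, hu, hvu⟩ := hS.exists_mem v hv hvc
    have h1 := abs_le.1 (abs_sub_offset_le hS hX hy hu hvu)
    linarith [four_mul_le_offset hs.le (idx u)]
  intro v hv w hw hvw
  by_cases hvc : v = c <;> by_cases hwc : w = c
  · rw [hvc, hwc]
  · rw [hvc] at hvw
    linarith [hpos w hw hwc]
  · rw [hwc] at hvw
    linarith [hpos v hv hvc]
  obtain ⟨u, hu, hvu⟩ := hS.exists_mem v hv hvc
  obtain ⟨u', hu', hwu'⟩ := hS.exists_mem w hw hwc
  rcases lt_trichotomy (idx u) (idx u') with h | h | h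
  · linarith [lt_of_idx_lt hS hX hy hs hu hu' h hvu hwu']
  · obtain rfl := hidx hu hu' h
    refine hinj u hu hvu hwu' ?_
    linarith [sub_eq_sub_of_mem_block hX hu hvu hwu']
  · linarith [lt_of_idx_lt hS hX hy hs hu' hu h hwu' hvu]

lemma two_mul_abs_sub_offset_lt (hXc : X c = 0) (hs : 0 ≤ s) {t : ℝ} {u v : V} (hu : u ∈ D)
    (hv : v ∈ B u) (hT : v ∈ plySet G A X t) :
    2 * |t - s * 4 ^ (idx u + 1)| < s * 4 ^ (idx u + 1) := by
  obtain ⟨-, w, hw, h, hlt⟩ := hT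
  rcases hS.adj_mem u hu v hv w hw h with hwu | ⟨rfl, rfl⟩
  · rw [sub_eq_sub_of_mem_block hX hu hv hwu] at hlt
    linarith [hy u hu v hv w hwu, abs_sub_offset_le hS hX hy hu hv,
      abs_sub_le t (X v) (s * 4 ^ (idx u + 1)), four_mul_le_offset hs (idx u)]
  · have ho : 0 ≤ s * 4 ^ (idx v + 1) := by positivity
    rwa [eq_offset hS hX hu, hXc, sub_zero, abs_of_nonneg ho] at hlt

/- The intervals of radius `o / 2` around the offsets `o = s * 4 ^ (i + 1)` are pairwise disjoint,
and the covered vertices of a block all lie in the interval of its offset. -/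
lemma exists_plySet_subset (hXc : X c = 0) (hs : 0 < s) (hidx : Set.InjOn idx D)
    (hD : D.Nonempty) (t : ℝ) : ∃ u ∈ D, plySet G A X t ⊆
      insert c (insert u (plySet G (B u) (y u) (t - s * 4 ^ (idx u + 1) + y u u))) := by
  by_cases h : ∃ v ∈ plySet G A X t, v ≠ c
  · obtain ⟨v₀, hv₀, hv₀c⟩ := h
    obtain ⟨u, hu, hv₀u⟩ := hS.exists_mem v₀ hv₀.1 hv₀c
    refine ⟨u, hu, fun v hv => ?_⟩
    rcases eq_or_ne v c with rfl | hvc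
    · exact Set.mem_insert _ _
    obtain ⟨u', hu', hvu'⟩ := hS.exists_mem v hv.1 hvc
    obtain rfl : u' = u := hidx hu' hu (eq_of_two_mul_abs_sub_offset_lt hs
      (two_mul_abs_sub_offset_lt hS hX hy hXc hs.le hu' hvu' hv)
      (two_mul_abs_sub_offset_lt hS hX hy hXc hs.le hu hv₀u hv₀))
    rcases eq_or_ne v u' with rfl | hvu
    · exact Set.mem_insert_of_mem _ (Set.mem_insert _ _)
    · exact Set.mem_insert_of_mem _
        (Set.mem_insert_of_mem _ (mem_plySet_block hS hX hu' hvu' hvu hv))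
  · push Not at h
    obtain ⟨u, hu⟩ := hD
    exact ⟨u, hu, fun v hv => h v hv ▸ Set.mem_insert _ _⟩

lemma exists_ncard_plySet_le (hXc : X c = 0) (hs : 0 < s) (hidx : Set.InjOn idx D)
    (hD : D.Nonempty) (t : ℝ) : ∃ u ∈ D, (plySet G A X t).ncard ≤
      (plySet G (B u) (y u) (t - s * 4 ^ (idx u + 1) + y u u)).ncard + 2 := by
  obtain ⟨u, hu, hsub⟩ := exists_plySet_subset hS hX hy hXc hs hidx hD t
  refine ⟨u, hu, (Set.ncard_le_ncard hsub (((finite_plySet _ _ _).insert u).insert c)).trans ?_⟩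
  have := Set.ncard_insert_le c (insert u (plySet G (B u) (y u) (t - s * 4 ^ (idx u + 1) + y u u)))
  have := Set.ncard_insert_le u (plySet G (B u) (y u) (t - s * 4 ^ (idx u + 1) + y u u))
  omega

end Glue

lemma four_pow_add_one_mul_half_pow_le (n Δ : ℕ) :
    (4 ^ Δ + 1) * ((n / 2 : ℕ) : ℝ) ^ (2 * Δ + 1) ≤ (n : ℝ) ^ (2 * Δ + 1) := by
  have h2 : (4 : ℝ) ^ Δ + 1 ≤ 2 ^ (2 * Δ + 1) := by
    rw [pow_succ, pow_mul, show (2 : ℝ) ^ 2 = 4 by norm_num]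
    linarith [one_le_pow₀ (by norm_num : (1 : ℝ) ≤ 4) (n := Δ)]
  calc (4 ^ Δ + 1) * ((n / 2 : ℕ) : ℝ) ^ (2 * Δ + 1)
      ≤ 2 ^ (2 * Δ + 1) * ((n : ℝ) / 2) ^ (2 * Δ + 1) := by
        gcongr
        exact Nat.cast_div_le
    _ = (n : ℝ) ^ (2 * Δ + 1) := by rw [← mul_pow, mul_div_cancel₀ _ two_ne_zero]

theorem IsStarDecomposition.exists_isLineDrawing {A D : Finset V} {c : V} {B : V → Finset V}
    {Δ : ℕ} (hS : IsStarDecomposition G A c D B) (hA : 2 ≤ A.card) (hD : D.card ≤ Δ)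
    (hB : ∀ u ∈ D, 2 * (B u).card ≤ A.card)
    (hy : ∀ u ∈ D, ∃ y, IsLineDrawing G (B u) (2 * Δ + 1) y) :
    ∃ X, IsLineDrawing G A (2 * Δ + 1) X := by
  choose! y hy using hy
  obtain ⟨idx, hinj, hidx⟩ := exists_injOn_lt_card D
  set s : ℝ := ((A.card / 2 : ℕ) : ℝ) ^ (2 * Δ + 1)
  have hs : 1 ≤ s := one_le_pow₀ (by exact_mod_cast (by omega : 1 ≤ A.card / 2))
  have hBcard : ∀ u ∈ D, (B u).card ≤ A.card / 2 := fun u hu => by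
    have := hB u hu
    omega
  have hys : ∀ u ∈ D, ∀ v ∈ B u, ∀ w ∈ B u, |y u v - y u w| ≤ s := fun u hu v hv w hw =>
    ((hy u hu).abs_sub_le v hv w hw).trans
      (pow_le_pow_left₀ (Nat.cast_nonneg _) (by exact_mod_cast hBcard u hu) _)
  obtain ⟨X, hXc, hX⟩ := exists_eq_of_pairwiseDisjoint hS.pairwiseDisjoint
    (fun u v => s * 4 ^ (idx u + 1) + (y u v - y u u)) 0
  replace hXc : X c = 0 := hXc c hS.center_not_mem
  have hDne : D.Nonempty := by
    obtain ⟨v, hv, hvc⟩ := Finset.exists_mem_ne hA c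
    obtain ⟨u, hu, -⟩ := hS.exists_mem v hv hvc
    exact ⟨u, hu⟩
  have hpos : (0 : ℝ) < s := by positivity
  have hΔ : ∀ u ∈ D, idx u < Δ := fun u hu => (hidx u hu).trans_le hD
  refine ⟨X, injOn_of_injOn_block hS hX hys hXc hpos hinj fun u hu => (hy u hu).injOn,
    fun v hv w hw => (abs_sub_le_of_mem hS hX hys hXc hpos.le hΔ hv hw).trans
      (four_pow_add_one_mul_half_pow_le _ _),
    fun v hv w hw h => one_le_abs_sub_of_adj hS hX hXc hs
      (fun u hu => (hy u hu).one_le_abs_sub) hv hw h, fun t => ?_⟩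
  obtain ⟨u, hu, hply⟩ := exists_ncard_plySet_le hS hX hys hXc hpos hinj hDne t
  have hrec := (hy u hu).ncard_plySet_le (t - s * 4 ^ (idx u + 1) + y u u)
  have hlog := Nat.log_mono_right (b := 2) (hBcard u hu)
  have := Nat.log_pos one_lt_two hA
  rw [Nat.log_div_base] at hlog
  omega

theorem exists_isLineDrawing [DecidableEq V] [Fintype V] [DecidableRel G.Adj] (hG : G.IsTree)
    {Δ : ℕ} (hΔ : ∀ v, G.degree v ≤ Δ) (A : Finset V) (hA : IsSubtree hG A)
    (hne : A.Nonempty) : ∃ x, IsLineDrawing G A (2 * Δ + 1) x := by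
  induction A using Finset.strongInduction with
  | H A ih =>
  obtain hA1 | hA2 : A.card = 1 ∨ 2 ≤ A.card := by
    have := hne.card_pos
    omega
  · exact ⟨0, isLineDrawing_of_card_eq_one hA1 _ _⟩
  obtain ⟨c, D, B, hS, hB⟩ := exists_isStarDecomposition hG hA hne
  exact hS.exists_isLineDrawing hA2 ((Finset.card_le_card hS.subset_neighborFinset).trans (hΔ c))
    (fun u hu => (hB u hu).2)
    fun u hu => ih (B u) (hS.ssubset hu) (hB u hu).1 ⟨u, hS.self_mem u hu⟩

end LineDrawing

section PlaneDrawing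

variable {V : Type*} {G : SimpleGraph V}

noncomputable def lineEmbedding (x : V → ℝ) (v : V) : EuclideanSpace ℝ (Fin 2) :=
  EuclideanSpace.single 0 (x v)

lemma dist_lineEmbedding (x : V → ℝ) (u v : V) :
    dist (lineEmbedding x u) (lineEmbedding x v) = |x u - x v| := by
  rw [lineEmbedding, lineEmbedding, PiLp.dist_single_same, Real.dist_eq]

lemma exists_adj_of_mem_ball_plyRadius {ρ : V → EuclideanSpace ℝ (Fin 2)} {α : ℝ} (hα : 0 < α)
    {v : V} {q : EuclideanSpace ℝ (Fin 2)} (hq : q ∈ Metric.ball (ρ v) (plyRadius G ρ α v)) :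
    ∃ w, G.Adj v w ∧ dist q (ρ v) < α * dist (ρ v) (ρ w) := by
  rw [Metric.mem_ball, plyRadius, ← div_lt_iff₀' hα] at hq
  rcases isEmpty_or_nonempty (G.neighborSet v) with h | h
  · rw [Real.iSup_of_isEmpty] at hq
    exact absurd hq (not_lt.2 (div_nonneg dist_nonneg hα.le))
  · obtain ⟨⟨w, hw⟩, hlt⟩ := exists_lt_of_lt_ciSup hq
    exact ⟨w, hw, (div_lt_iff₀' hα).1 hlt⟩

lemma mem_plySet_univ_of_mem_ball [Fintype V] {x : V → ℝ} {v : V} {q : EuclideanSpace ℝ (Fin 2)}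
    (hq : q ∈ Metric.ball (lineEmbedding x v) (plyRadius G (lineEmbedding x) (1 / 2) v)) :
    v ∈ plySet G Finset.univ x (q 0) := by
  obtain ⟨w, h, hlt⟩ := exists_adj_of_mem_ball_plyRadius (by norm_num : (0 : ℝ) < 1 / 2) hq
  have hq₀ := PiLp.dist_apply_le q (lineEmbedding x v) 0
  have hx₀ : lineEmbedding x v 0 = x v := by simp [lineEmbedding]
  rw [dist_lineEmbedding] at hlt
  rw [hx₀, Real.dist_eq] at hq₀
  exact ⟨Finset.mem_univ v, w, Finset.mem_univ w, h, by linarith⟩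

lemma two_mul_natLog_le_three_mul_log (n : ℕ) : (2 * Nat.log 2 n : ℝ) ≤ 3 * Real.log n := by
  have h := Real.natLog_le_logb n 2
  have hlog2 := Real.log_two_gt_d9
  rw [Real.logb, Nat.cast_ofNat, le_div_iff₀ (by linarith)] at h
  nlinarith [Nat.cast_nonneg (α := ℝ) (Nat.log 2 n)]

namespace IsLineDrawing

variable [Fintype V] {k : ℕ} {x : V → ℝ} (hx : IsLineDrawing G Finset.univ k x)
include hx

lemma injective_lineEmbedding : Function.Injective (lineEmbedding x) := fun u v h =>
  hx.injOn (Finset.mem_coe.2 (Finset.mem_univ u)) (Finset.mem_coe.2 (Finset.mem_univ v))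
    (by simpa [lineEmbedding] using congrArg (· 0) h)

lemma ncard_ball_plyRadius_le (q : EuclideanSpace ℝ (Fin 2)) :
    ({v | q ∈ Metric.ball (lineEmbedding x v) (plyRadius G (lineEmbedding x) (1 / 2) v)}.ncard
      : ℝ) ≤ 3 * (Real.log (Fintype.card V) + 1) := by
  have hply := hx.ncard_plySet_le (q 0)
  rw [Finset.card_univ] at hply
  have hsub := Set.ncard_le_ncard (fun v hv => mem_plySet_univ_of_mem_ball (G := G) (x := x) hv)
    (finite_plySet (G := G) Finset.univ x (q 0))
  calc _ ≤ ((2 * Nat.log 2 (Fintype.card V) : ℕ) : ℝ) := by exact_mod_cast hsub.trans hply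
    _ ≤ 3 * Real.log (Fintype.card V) := by exact_mod_cast two_mul_natLog_le_three_mul_log _
    _ ≤ 3 * (Real.log (Fintype.card V) + 1) := by linarith

end IsLineDrawing

lemma IsLineDrawing.dist_le_rpow_mul_dist [Fintype V] {x : V → ℝ} {Δ : ℕ}
    (hx : IsLineDrawing G Finset.univ (2 * Δ + 1) x) (hΔ : 1 ≤ Δ)
    (hV : 1 ≤ Fintype.card V) (u v : V) {u' v' : V} (h' : G.Adj u' v') :
    dist (lineEmbedding x u) (lineEmbedding x v) ≤
      (Fintype.card V : ℝ) ^ (3 * (Δ : ℝ)) * dist (lineEmbedding x u') (lineEmbedding x v') := by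
  rw [dist_lineEmbedding, dist_lineEmbedding]
  have hΔ' : (1 : ℝ) ≤ Δ := by exact_mod_cast hΔ
  calc |x u - x v| ≤ (Fintype.card V : ℝ) ^ (2 * Δ + 1) := by
        simpa only [Finset.card_univ] using
          hx.abs_sub_le u (Finset.mem_univ u) v (Finset.mem_univ v)
    _ ≤ (Fintype.card V : ℝ) ^ (3 * (Δ : ℝ)) := by
        rw [← Real.rpow_natCast]
        exact Real.rpow_le_rpow_of_exponent_le (by exact_mod_cast hV) (by push_cast; linarith)
    _ ≤ (Fintype.card V : ℝ) ^ (3 * (Δ : ℝ)) * |x u' - x v'| :=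
        le_mul_of_one_le_right (by positivity)
          (hx.one_le_abs_sub u' (Finset.mem_univ u') v' (Finset.mem_univ v') h')

end PlaneDrawing

end TreeDrawing

open TreeDrawing

/-- There is a constant `C > 0` such that every finite tree on
`n ≥ 2` vertices with maximum degree at most `Δ` (for any `Δ ≥ 2`) has a
straight-line drawing `ρ` in which (1) every point of the plane is covered by
at most `C·(log n + 1)` ply disks with parameter `α = 1/2`, and (2) the ratio
of any two edge lengths is at most `n^(C·Δ)`: trees have drawings with ply
number `O(log n)` for `α = 1/2` in area `n^{O(Δ)}`. -/
theorem stmt3 :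
    ∃ C : ℝ, 0 < C ∧
      ∀ (Δ : ℕ), 2 ≤ Δ →
        ∀ (V : Type) [Fintype V] [DecidableEq V]
          (G : SimpleGraph V) [DecidableRel G.Adj],
          G.IsTree → (∀ v : V, G.degree v ≤ Δ) → 2 ≤ Fintype.card V →
          ∃ ρ : V → EuclideanSpace ℝ (Fin 2), Function.Injective ρ ∧
            (∀ q : EuclideanSpace ℝ (Fin 2),
              (Set.ncard {v : V | q ∈ Metric.ball (ρ v) (plyRadius G ρ (1 / 2) v)} : ℝ)
                ≤ C * (Real.log (Fintype.card V) + 1)) ∧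
            (∀ u v u' v' : V, G.Adj u v → G.Adj u' v' →
              dist (ρ u) (ρ v) ≤
                (Fintype.card V : ℝ) ^ (C * Δ) * dist (ρ u') (ρ v')) := by
  refine ⟨3, by norm_num, fun Δ hΔ V _ _ G _ hG hdeg hV => ?_⟩
  obtain ⟨x, hx⟩ := exists_isLineDrawing hG hdeg Finset.univ
    (fun _ _ _ _ z _ => Finset.mem_univ z)
    (Finset.univ_nonempty_iff.2 (Fintype.card_pos_iff.1 (by omega)))
  exact ⟨lineEmbedding x, hx.injective_lineEmbedding, hx.ncard_ball_plyRadius_le,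
    fun u v _ _ _ h' => hx.dist_le_rpow_mul_dist (by omega) (by omega) u v h'⟩
end

section
/- Let m ≥ 2 and let x : Fin m → ℝ be strictly increasing, with consecutive gaps g_i = x_{i+1} − x_i for 0 ≤ i ≤ m−2. Suppose that for every 0 ≤ i ≤ m−3 we have g_i / 2 ≤ g_{i+1} ≤ 2·g_i. Place vertex i at the point (x_i, 0) ∈ ℝ², and let r_i = (1/2)·(the maximum of the gaps adjacent to i), i.e., r_0 = g_0/2, r_{m−1} = g_{m−2}/2, and r_i = max(g_{i−1}, g_i)/2 otherwise. Then every point q ∈ ℝ² lies in at most 2 of the open disks of radius r_i centered at (x_i, 0). That is, a 2-drawing of a path has ply number at most 2 for α = 1/2. -/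
/-!
The gap condition makes each radius at most the gap on either side of its vertex:
`r i ≤ g i` and `r k ≤ g (k - 1)`. Hence for `i + 2 ≤ k` the radii of vertices `i` and `k` add up
to at most `g i + g (k - 1) ≤ x k - x i`, so their disks are disjoint. A point therefore lies
only in disks of indices pairwise differing by at most one, of which there are at most two.
-/

theorem Set.ncard_le_two_of_forall_lt_add_two {S : Set ℕ} (h : ∀ i ∈ S, ∀ k ∈ S, k < i + 2) :
    S.ncard ≤ 2 := by
  rcases S.eq_empty_or_nonempty with rfl | hne
  · simp
  have hsub : S ⊆ {sInf S, sInf S + 1} := fun k hk => by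
    have := Nat.sInf_le hk
    have := h _ (Nat.sInf_mem hne) k hk
    simp only [Set.mem_insert_iff, Set.mem_singleton_iff]
    omega
  calc S.ncard ≤ ({sInf S, sInf S + 1} : Set ℕ).ncard := Set.ncard_le_ncard hsub
    _ ≤ ({sInf S + 1} : Set ℕ).ncard + 1 := Set.ncard_insert_le _ _
    _ = 2 := by rw [Set.ncard_singleton]

theorem dist_equiv_symm_vecCons_zero (a b : ℝ) :
    dist ((EuclideanSpace.equiv (Fin 2) ℝ).symm ![a, 0])
      ((EuclideanSpace.equiv (Fin 2) ℝ).symm ![b, 0]) = dist a b := by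
  simp [EuclideanSpace.dist_eq, Fin.sum_univ_two]

section PathDrawing

variable {m : ℕ} {x g r : ℕ → ℝ}

theorem gap_pos (hmono : ∀ i j : ℕ, i < j → j < m → x i < x j)
    (hg : ∀ i : ℕ, i + 2 ≤ m → g i = x (i + 1) - x i) {i : ℕ} (hi : i + 2 ≤ m) : 0 < g i := by
  rw [hg i hi, sub_pos]
  exact hmono i (i + 1) (by omega) (by omega)

theorem gap_add_gap_le_sub (hmono : ∀ i j : ℕ, i < j → j < m → x i < x j)
    (hg : ∀ i : ℕ, i + 2 ≤ m → g i = x (i + 1) - x i) {i k : ℕ} (hik : i + 2 ≤ k) (hk : k < m) :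
    g i + g (k - 1) ≤ x k - x i := by
  have hgk : g (k - 1) = x k - x (k - 1) := by
    rw [hg (k - 1) (by omega), Nat.sub_add_cancel (by omega)]
  have hmid : x (i + 1) ≤ x (k - 1) := by
    rcases (show i + 1 < k - 1 ∨ i + 1 = k - 1 by omega) with hlt | heq
    · exact (hmono _ _ hlt (by omega)).le
    · rw [heq]
  rw [hg i (by omega), hgk]
  linarith

theorem radius_le_gap_right (hgpos : ∀ i : ℕ, i + 2 ≤ m → 0 < g i)
    (hgap : ∀ i : ℕ, i + 3 ≤ m → g i / 2 ≤ g (i + 1) ∧ g (i + 1) ≤ 2 * g i)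
    (hr0 : r 0 = g 0 / 2)
    (hrmid : ∀ i : ℕ, 1 ≤ i → i + 2 ≤ m → r i = max (g (i - 1)) (g i) / 2)
    {i : ℕ} (hi : i + 2 ≤ m) : r i ≤ g i := by
  have hgi := hgpos i hi
  rcases Nat.eq_zero_or_pos i with rfl | hi1
  · rw [hr0]
    linarith
  · have hprev : g (i - 1) / 2 ≤ g i := by
      simpa [Nat.sub_add_cancel hi1] using (hgap (i - 1) (by omega)).1
    rw [hrmid i hi1 hi]
    have : max (g (i - 1)) (g i) ≤ 2 * g i := max_le (by linarith) (by linarith)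
    linarith

theorem radius_le_gap_left (hgpos : ∀ i : ℕ, i + 2 ≤ m → 0 < g i)
    (hgap : ∀ i : ℕ, i + 3 ≤ m → g i / 2 ≤ g (i + 1) ∧ g (i + 1) ≤ 2 * g i)
    (hrlast : r (m - 1) = g (m - 2) / 2)
    (hrmid : ∀ i : ℕ, 1 ≤ i → i + 2 ≤ m → r i = max (g (i - 1)) (g i) / 2)
    {k : ℕ} (hk1 : 1 ≤ k) (hk : k < m) : r k ≤ g (k - 1) := by
  have hgk := hgpos (k - 1) (by omega)
  rcases (show k = m - 1 ∨ k + 2 ≤ m by omega) with rfl | hk2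
  · rw [hrlast, show m - 1 - 1 = m - 2 by omega]
    rw [show m - 1 - 1 = m - 2 by omega] at hgk
    linarith
  · have hnext : g k ≤ 2 * g (k - 1) := by
      simpa [Nat.sub_add_cancel hk1] using (hgap (k - 1) (by omega)).2
    rw [hrmid k hk1 hk2]
    have : max (g (k - 1)) (g k) ≤ 2 * g (k - 1) := max_le (by linarith) hnext
    linarith

end PathDrawing

theorem stmt5_general (m : ℕ) (x : ℕ → ℝ)
    (hmono : ∀ i j : ℕ, i < j → j < m → x i < x j)
    (g : ℕ → ℝ) (hg : ∀ i : ℕ, i + 2 ≤ m → g i = x (i + 1) - x i)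
    (hgap : ∀ i : ℕ, i + 3 ≤ m → g i / 2 ≤ g (i + 1) ∧ g (i + 1) ≤ 2 * g i)
    (p : ℕ → EuclideanSpace ℝ (Fin 2))
    (hp : ∀ i : ℕ, p i = (EuclideanSpace.equiv (Fin 2) ℝ).symm ![x i, 0])
    (r : ℕ → ℝ)
    (hr0 : r 0 = g 0 / 2)
    (hrlast : r (m - 1) = g (m - 2) / 2)
    (hrmid : ∀ i : ℕ, 1 ≤ i → i + 2 ≤ m → r i = max (g (i - 1)) (g i) / 2) :
    ∀ q : EuclideanSpace ℝ (Fin 2),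
      Set.ncard {i : ℕ | i < m ∧ q ∈ Metric.ball (p i) (r i)} ≤ 2 := by
  intro q
  have hgpos := fun i => gap_pos (i := i) hmono hg
  have hsep : ∀ i k, i + 2 ≤ k → k < m → r i + r k ≤ dist (p i) (p k) := fun i k hik hk => by
    rw [hp, hp, dist_equiv_symm_vecCons_zero, Real.dist_eq, abs_sub_comm,
      abs_of_pos (sub_pos.2 (hmono i k (by omega) hk))]
    have := radius_le_gap_right hgpos hgap hr0 hrmid (i := i) (by omega)
    have := radius_le_gap_left hgpos hgap hrlast hrmid (k := k) (by omega) hk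
    linarith [gap_add_gap_le_sub hmono hg hik hk]
  refine Set.ncard_le_two_of_forall_lt_add_two fun i ⟨hi, hqi⟩ k ⟨hk, hqk⟩ => ?_
  by_contra! hik
  exact Set.disjoint_left.mp (Metric.ball_disjoint_ball (hsep i k hik hk)) hqi hqk

/-- A 2-drawing of a path has ply number at most 2 (for
`α = 1/2`): if `x 0 < x 1 < ⋯ < x (m-1)` are the vertex positions on a line,
the consecutive gaps `g i = x (i+1) − x i` satisfy
`g i / 2 ≤ g (i+1) ≤ 2·g i`, and `r i` is half the larger gap adjacent to
vertex `i`, then no point of the plane lies in more than 2 of the open disks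
of radius `r i` centered at the points `(x i, 0)`. -/
theorem stmt5 (m : ℕ) (hm : 2 ≤ m) (x : ℕ → ℝ)
    (hmono : ∀ i j : ℕ, i < j → j < m → x i < x j)
    (g : ℕ → ℝ) (hg : ∀ i : ℕ, i + 2 ≤ m → g i = x (i + 1) - x i)
    (hgap : ∀ i : ℕ, i + 3 ≤ m → g i / 2 ≤ g (i + 1) ∧ g (i + 1) ≤ 2 * g i)
    (p : ℕ → EuclideanSpace ℝ (Fin 2))
    (hp : ∀ i : ℕ, p i = (EuclideanSpace.equiv (Fin 2) ℝ).symm ![x i, 0])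
    (r : ℕ → ℝ)
    (hr0 : r 0 = g 0 / 2)
    (hrlast : r (m - 1) = g (m - 2) / 2)
    (hrmid : ∀ i : ℕ, 1 ≤ i → i + 2 ≤ m → r i = max (g (i - 1)) (g i) / 2) :
    ∀ q : EuclideanSpace ℝ (Fin 2),
      Set.ncard {i : ℕ | i < m ∧ q ∈ Metric.ball (p i) (r i)} ≤ 2 :=
  stmt5_general m x hmono g hg hgap p hp r hr0 hrlast hrmid
end

section
/- Let k ≥ 1 and let n₁, …, n_k be real numbers, each at least 1. Then there exist positive real numbers l₁, …, l_k such that: l₁ ≥ n₁; l_{i+1} ≥ n_i + n_{i+1} for every 1 ≤ i ≤ k−1; l_i / 2 ≤ l_{i+1} ≤ 2·l_i for every 1 ≤ i ≤ k−1 (so the lengths form a 2-drawing); and l₁ + l₂ + ⋯ + l_k ≤ 6·(n₁ + n₂ + ⋯ + n_k). -/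
/-!
Let `a j` be the length the theorem demands of the `j`-th edge (`n 1` for the first one,
`n (j - 1) + n j` afterwards) and spread these demands geometrically:
`l i = ∑ j, a j * 2 ^ (-|i - j|)`. Moving `i` by one changes every term by a factor of at most
two, so `l` is a 2-drawing; the `j = i` term gives `a i ≤ l i`; and since
`∑ i, 2 ^ (-|i - j|) ≤ 3`, the total length is at most `3 ∑ a j ≤ 6 ∑ n i`.
-/

open Finset

lemma sum_range_half_pow_dist_le (j N : ℕ) :
    ∑ i ∈ range (j + 1 + N), (1 / 2 : ℝ) ^ Nat.dist i j ≤ 3 := by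
  rw [sum_range_add]
  have below : ∑ i ∈ range (j + 1), (1 / 2 : ℝ) ^ Nat.dist i j ≤ 2 := by
    rw [← sum_range_reflect]
    calc ∑ m ∈ range (j + 1), (1 / 2 : ℝ) ^ Nat.dist (j + 1 - 1 - m) j
        = ∑ m ∈ range (j + 1), (1 / 2 : ℝ) ^ m := by
          refine sum_congr rfl fun m hm => ?_
          rw [mem_range] at hm
          rw [Nat.dist_eq_sub_of_le (by omega)]
          congr 1
          omega
      _ ≤ 2 := sum_geometric_two_le _
  have above : ∑ m ∈ range N, (1 / 2 : ℝ) ^ Nat.dist (j + 1 + m) j ≤ 1 := by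
    calc ∑ m ∈ range N, (1 / 2 : ℝ) ^ Nat.dist (j + 1 + m) j
        = 1 / 2 * ∑ m ∈ range N, (1 / 2 : ℝ) ^ m := by
          rw [mul_sum]
          refine sum_congr rfl fun m _ => ?_
          rw [Nat.dist_eq_sub_of_le_right (by omega), show j + 1 + m - j = m + 1 by omega]
          ring
      _ ≤ 1 / 2 * 2 := by gcongr; exact sum_geometric_two_le _
      _ = 1 := by norm_num
  linarith

lemma sum_half_pow_dist_le (s : Finset ℕ) (j : ℕ) :
    ∑ i ∈ s, (1 / 2 : ℝ) ^ Nat.dist i j ≤ 3 := by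
  obtain ⟨N, hN⟩ := s.exists_nat_subset_range
  have hsub : s ⊆ range (j + 1 + N) := hN.trans (range_subset_range.2 (by omega))
  exact (sum_le_sum_of_subset_of_nonneg hsub fun _ _ _ => by positivity).trans
    (sum_range_half_pow_dist_le j N)

lemma half_pow_dist_le_two_mul {i i' : ℕ} (h : Nat.dist i i' ≤ 1) (j : ℕ) :
    (1 / 2 : ℝ) ^ Nat.dist i' j ≤ 2 * (1 / 2) ^ Nat.dist i j := by
  have hd : Nat.dist i j ≤ Nat.dist i' j + 1 :=
    (Nat.dist.triangle_inequality i i' j).trans (by omega)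
  calc (1 / 2 : ℝ) ^ Nat.dist i' j = 2 * (1 / 2) ^ (Nat.dist i' j + 1) := by ring
    _ ≤ 2 * (1 / 2) ^ Nat.dist i j :=
      mul_le_mul_of_nonneg_left (pow_le_pow_of_le_one (by norm_num) (by norm_num) hd) zero_le_two

noncomputable def geomSpread (a : ℕ → ℝ) (s : Finset ℕ) (i : ℕ) : ℝ :=
  ∑ j ∈ s, a j * (1 / 2) ^ Nat.dist i j

section geomSpread

variable {a : ℕ → ℝ} {s : Finset ℕ}

lemma le_geomSpread (ha : ∀ j ∈ s, 0 ≤ a j) {i : ℕ} (hi : i ∈ s) : a i ≤ geomSpread a s i := by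
  have := single_le_sum (f := fun j => a j * (1 / 2 : ℝ) ^ Nat.dist i j)
    (fun j hj => mul_nonneg (ha j hj) (by positivity)) hi
  rwa [Nat.dist_self, pow_zero, mul_one] at this

lemma geomSpread_le_two_mul (ha : ∀ j ∈ s, 0 ≤ a j) {i i' : ℕ} (h : Nat.dist i i' ≤ 1) :
    geomSpread a s i' ≤ 2 * geomSpread a s i := by
  simp only [geomSpread]
  rw [mul_sum]
  refine sum_le_sum fun j hj => ?_
  calc a j * (1 / 2) ^ Nat.dist i' j ≤ a j * (2 * (1 / 2) ^ Nat.dist i j) :=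
        mul_le_mul_of_nonneg_left (half_pow_dist_le_two_mul h j) (ha j hj)
    _ = 2 * (a j * (1 / 2) ^ Nat.dist i j) := by ring

lemma sum_geomSpread_le (ha : ∀ j ∈ s, 0 ≤ a j) (t : Finset ℕ) :
    ∑ i ∈ t, geomSpread a s i ≤ 3 * ∑ j ∈ s, a j := by
  simp only [geomSpread]
  rw [sum_comm, mul_sum]
  refine sum_le_sum fun j hj => ?_
  rw [← mul_sum, mul_comm 3]
  exact mul_le_mul_of_nonneg_left (sum_half_pow_dist_le t j) (ha j hj)

end geomSpread

def pathDemand (n : ℕ → ℝ) (j : ℕ) : ℝ :=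
  if j = 1 then n 1 else n (j - 1) + n j

lemma sum_pathDemand (n : ℕ → ℝ) {k : ℕ} (hk : 1 ≤ k) :
    ∑ j ∈ Icc 1 k, pathDemand n j = 2 * ∑ j ∈ Icc 1 k, n j - n k := by
  induction k, hk using Nat.le_induction with
  | base => simp [pathDemand]; ring
  | succ k hk ih =>
    rw [sum_Icc_succ_top (by omega), sum_Icc_succ_top (by omega), ih]
    simp only [pathDemand, show k + 1 ≠ 1 by omega, if_false, Nat.add_sub_cancel]
    ring

lemma one_le_pathDemand {n : ℕ → ℝ} {k : ℕ} (hn : ∀ i : ℕ, 1 ≤ i → i ≤ k → 1 ≤ n i)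
    {j : ℕ} (hj : j ∈ Icc 1 k) : 1 ≤ pathDemand n j := by
  rw [mem_Icc] at hj
  unfold pathDemand
  split_ifs with h
  · exact hn 1 le_rfl (h ▸ hj.2)
  · linarith [hn (j - 1) (by omega) (by omega), hn j hj.1 hj.2]

/-- guarantee of the `DrawPath` algorithm.  Given reals
`n 1, …, n k ≥ 1`, there are positive lengths `l 1, …, l k` with `l 1 ≥ n 1`,
`l (i+1) ≥ n i + n (i+1)`, consecutive lengths within a factor of two of each
other (a 2-drawing), and total length at most `6·(n 1 + ⋯ + n k)`. -/
theorem stmt6 (k : ℕ) (hk : 1 ≤ k) (n : ℕ → ℝ)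
    (hn : ∀ i : ℕ, 1 ≤ i → i ≤ k → 1 ≤ n i) :
    ∃ l : ℕ → ℝ,
      (∀ i : ℕ, 1 ≤ i → i ≤ k → 0 < l i) ∧
      n 1 ≤ l 1 ∧
      (∀ i : ℕ, 1 ≤ i → i + 1 ≤ k → n i + n (i + 1) ≤ l (i + 1)) ∧
      (∀ i : ℕ, 1 ≤ i → i + 1 ≤ k → l i / 2 ≤ l (i + 1) ∧ l (i + 1) ≤ 2 * l i) ∧
      (∑ i ∈ Finset.Icc 1 k, l i) ≤ 6 * ∑ i ∈ Finset.Icc 1 k, n i := by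
  have hdemand : ∀ j ∈ Icc 1 k, 0 ≤ pathDemand n j := fun j hj =>
    zero_le_one.trans (one_le_pathDemand hn hj)
  have hle : ∀ {i}, 1 ≤ i → i ≤ k → pathDemand n i ≤ geomSpread (pathDemand n) (Icc 1 k) i :=
    fun h1 h2 => le_geomSpread hdemand (mem_Icc.2 ⟨h1, h2⟩)
  have hstep : ∀ i, Nat.dist i (i + 1) ≤ 1 ∧ Nat.dist (i + 1) i ≤ 1 := fun i => by
    simp [Nat.dist]
  refine ⟨geomSpread (pathDemand n) (Icc 1 k), fun i h1 h2 => ?_, ?_, fun i h1 h2 => ?_,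
    fun i _ _ => ⟨?_, geomSpread_le_two_mul hdemand (hstep i).1⟩, ?_⟩
  · exact zero_lt_one.trans_le ((one_le_pathDemand hn (mem_Icc.2 ⟨h1, h2⟩)).trans (hle h1 h2))
  · simpa [pathDemand] using hle le_rfl hk
  · simpa [pathDemand, show i ≠ 0 by omega] using hle (by omega) h2
  · linarith [geomSpread_le_two_mul hdemand (s := Icc 1 k) (a := pathDemand n) (hstep i).2]
  · calc ∑ i ∈ Icc 1 k, geomSpread (pathDemand n) (Icc 1 k) i
        ≤ 3 * ∑ j ∈ Icc 1 k, pathDemand n j := sum_geomSpread_le hdemand _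
      _ = 3 * (2 * ∑ j ∈ Icc 1 k, n j - n k) := by rw [sum_pathDemand n hk]
      _ ≤ 6 * ∑ i ∈ Icc 1 k, n i := by linarith [hn k hk le_rfl]
end

section
/- Fix m ≥ 1, h ≥ 1, and α with 0 < α ≤ 1/2, and let c = 1 + 1/α. Let G(m,h) be the graph consisting of m disjoint complete binary trees of height h together with an apex vertex adjacent to every tree vertex. Then for every straight-line drawing ρ of G(m,h), the ply number of ρ with parameter α is at least min( m , (α²/((1+α)²·c²)) · 2^h/(2h) ). -/
open Real

/-- The vertex set of `G(m,h)`: an apex vertex (`none`) together with, for each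
of `m` trees, the Boolean strings of length at most `h` (the vertices of a
complete binary tree of height `h`). -/
def TreeApexVertex (m h : ℕ) : Type :=
  Option (Fin m × {l : List Bool // l.length ≤ h})

/-- The graph `G(m,h)`: `m` disjoint complete binary trees of height `h`
(each string `l` of length `< h` is joined to `l ++ [b]` within the same tree)
together with an apex vertex adjacent to every tree vertex. -/
def treesWithApex (m h : ℕ) : SimpleGraph (TreeApexVertex m h) :=
  SimpleGraph.fromRel fun x y =>
    (x = none ∧ y ≠ none) ∨
    (∃ (i : Fin m) (l l' : {l : List Bool // l.length ≤ h}) (b : Bool),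
      x = some (i, l) ∧ y = some (i, l') ∧ l'.val = l.val ++ [b])

/-!
If the apex point `p` lies in a ply disk from every tree, it is covered `m` times. Otherwise some
tree has no ply disk containing `p`. Write `d v` for the distance from `p` to a vertex `v` of that
tree. Since `v` is adjacent to the apex and its disk misses `p`, its ply disk has radius between
`α · d v` and `d v`. Along a tree edge `uv`, the disk of `u` misses `p`, so `|uv| ≤ d u / α`, hence
`d v ≤ c · d u` and vice versa. So the distances of the `2^h` leaves lie in `[d₀ c⁻ʰ, d₀ cʰ]`, and
one of the `2h` ranges `[t, c t]` contains at least `2^h / (2h)` of them. Those leaves have ply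
disks of radius at least `α t` inside the disk of radius `(1 + α) c t` around `p`, so comparing
areas, some point lies in at least a fraction `α² / ((1 + α)² c²)` of them.
-/

open Finset Metric MeasureTheory
open scoped ENNReal Classical

theorem MeasureTheory.exists_sum_measure_le_card_mul {α ι : Type*} [MeasurableSpace α]
    [Nonempty α] (μ : Measure α) (s : Finset ι) {A : ι → Set α}
    (hA : ∀ i ∈ s, MeasurableSet (A i)) :
    ∃ q, ∑ i ∈ s, μ (A i) ≤ #{i ∈ s | q ∈ A i} * μ (⋃ i ∈ s, A i) := by
  set count : α → ℕ := fun q => #{i ∈ s | q ∈ A i}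
  obtain ⟨_, ⟨q₀, rfl⟩, hq₀⟩ := Set.exists_max_image (Set.range count) id
    ((Set.finite_Iic #s).subset (Set.range_subset_iff.2 fun q => card_filter_le s _))
    (Set.range_nonempty count)
  refine ⟨q₀, ?_⟩
  set U := ⋃ i ∈ s, A i
  have hcount : ∀ q, ∑ i ∈ s, (A i).indicator 1 q = (count q : ℝ≥0∞) := fun q => by
    simp only [Set.indicator_apply, Pi.one_apply, sum_boole, count]
  calc ∑ i ∈ s, μ (A i) = ∑ i ∈ s, ∫⁻ q, (A i).indicator 1 q ∂μ :=
        sum_congr rfl fun i hi => (lintegral_indicator_one (hA i hi)).symm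
    _ = ∫⁻ q, (count q : ℝ≥0∞) ∂μ := by
        rw [← lintegral_finsetSum _ fun i hi => measurable_one.indicator (hA i hi)]
        simp_rw [hcount]
    _ ≤ ∫⁻ q, U.indicator (fun _ => (count q₀ : ℝ≥0∞)) q ∂μ := by
        refine lintegral_mono fun q => ?_
        by_cases hq : q ∈ U
        · rw [Set.indicator_of_mem hq]
          exact Nat.cast_le.2 (hq₀ _ ⟨q, rfl⟩)
        · have : count q = 0 := by
            simp only [count, card_eq_zero, filter_eq_empty_iff]
            exact fun i hi hqi => hq (Set.mem_biUnion hi hqi)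
          simp [this]
    _ = count q₀ * μ U :=
        lintegral_indicator_const (Finset.measurableSet_biUnion s hA) _

theorem exists_sum_pow_radius_le_card_mul {E ι : Type*} [NormedAddCommGroup E]
    [NormedSpace ℝ E] [Nontrivial E] [FiniteDimensional ℝ E] [MeasurableSpace E] [BorelSpace E]
    (s : Finset ι) (x : ι → E) {r : ι → ℝ} (hr : ∀ i ∈ s, 0 ≤ r i) (p : E) {R : ℝ}
    (hR : 0 ≤ R) (hsub : ∀ i ∈ s, ball (x i) (r i) ⊆ ball p R) :
    ∃ q, ∑ i ∈ s, r i ^ Module.finrank ℝ E ≤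
      #{i ∈ s | q ∈ ball (x i) (r i)} * R ^ Module.finrank ℝ E := by
  set μ : Measure E := Measure.addHaar
  set d := Module.finrank ℝ E
  obtain ⟨q, hq⟩ := exists_sum_measure_le_card_mul μ s fun i _ => measurableSet_ball (x := x i)
  refine ⟨q, ?_⟩
  have hball : ∀ y (ε : ℝ), 0 ≤ ε → μ (ball y ε) = ENNReal.ofReal (ε ^ d) * μ (ball 0 1) :=
    fun y ε hε => Measure.addHaar_ball μ y hε
  have hV₀ : μ (ball 0 1) ≠ 0 := (measure_ball_pos μ _ one_pos).ne'
  have hV : μ (ball 0 1) ≠ ⊤ := measure_ball_lt_top.ne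
  have key : (∑ i ∈ s, ENNReal.ofReal (r i ^ d)) * μ (ball 0 1) ≤
      (#{i ∈ s | q ∈ ball (x i) (r i)} * ENNReal.ofReal (R ^ d)) * μ (ball 0 1) := by
    calc (∑ i ∈ s, ENNReal.ofReal (r i ^ d)) * μ (ball 0 1) = ∑ i ∈ s, μ (ball (x i) (r i)) := by
          rw [sum_mul]; exact sum_congr rfl fun i hi => (hball _ _ (hr i hi)).symm
      _ ≤ #{i ∈ s | q ∈ ball (x i) (r i)} * μ (ball p R) :=
          hq.trans (mul_le_mul_right (measure_mono (Set.iUnion₂_subset hsub)) _)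
      _ = _ := by rw [hball p R hR, mul_assoc]
  rw [ENNReal.mul_le_mul_iff_left hV₀ hV, ← ENNReal.ofReal_sum_of_nonneg fun i hi => by
    have := hr i hi; positivity, ← ENNReal.ofReal_natCast, ← ENNReal.ofReal_mul (by positivity),
    ENNReal.ofReal_le_ofReal_iff (by positivity)] at key
  exact key

theorem exists_pow_mul_le_and_le_pow_succ_mul {a c x : ℝ} {k : ℕ} (hk : 1 ≤ k)
    (hx : a ≤ x) (hxk : x ≤ c ^ k * a) : ∃ j < k, c ^ j * a ≤ x ∧ x ≤ c ^ (j + 1) * a := by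
  induction k, hk using Nat.le_induction with
  | base => exact ⟨0, one_pos, by simpa using hx, by simpa using hxk⟩
  | succ k _ ih =>
    by_cases h : x ≤ c ^ k * a
    · obtain ⟨j, hj, hjx⟩ := ih h
      exact ⟨j, by omega, hjx⟩
    · exact ⟨k, k.lt_succ_self, (not_le.1 h).le, hxk⟩

theorem exists_geometric_bucket {ι : Type*} (s : Finset ι) (x : ι → ℝ) {a c : ℝ} (ha : 0 < a)
    (hc : 0 < c) (k : ℕ) (hx : ∀ i ∈ s, a ≤ x i ∧ x i ≤ c ^ k * a) :
    ∃ t > 0, (#s : ℝ) / k ≤ #{i ∈ s | t ≤ x i ∧ x i ≤ c * t} := by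
  rcases Nat.eq_zero_or_pos k with rfl | hk
  · exact ⟨a, ha, by simp⟩
  choose! j hj hjx using fun i hi =>
    exists_pow_mul_le_and_le_pow_succ_mul hk (hx i hi).1 (hx i hi).2
  obtain ⟨j₀, -, hj₀⟩ := exists_le_card_fiber_of_nsmul_le_card_of_maps_to (b := (#s : ℝ) / k)
    (fun i hi => mem_range.2 (hj i hi)) (nonempty_range_iff.2 hk.ne')
    (by rw [card_range, nsmul_eq_mul, mul_div_cancel₀ _ (by positivity)])
  refine ⟨c ^ j₀ * a, by positivity, hj₀.trans ?_⟩
  refine Nat.cast_le.2 (card_le_card fun i hi => ?_)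
  obtain ⟨hs, rfl⟩ := mem_filter.1 hi
  exact mem_filter.2 ⟨hs, (hjx i hs).1, by rw [← mul_assoc, ← pow_succ']; exact (hjx i hs).2⟩

noncomputable def plyCount {V : Type*} (G : SimpleGraph V) (ρ : V → EuclideanSpace ℝ (Fin 2))
    (α : ℝ) (q : EuclideanSpace ℝ (Fin 2)) : ℕ :=
  {v | q ∈ ball (ρ v) (plyRadius G ρ α v)}.ncard

section PlyDisks

variable {V : Type*} [Finite V] {G : SimpleGraph V} (ρ : V → EuclideanSpace ℝ (Fin 2)) {α : ℝ}

theorem mul_dist_le_plyRadius (hα : 0 ≤ α) {v w : V} (h : G.Adj v w) :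
    α * dist (ρ v) (ρ w) ≤ plyRadius G ρ α v :=
  mul_le_mul_of_nonneg_left
    (le_ciSup (f := fun w : G.neighborSet v => dist (ρ v) (ρ w)) (Set.finite_range _).bddAbove
      ⟨w, h⟩) hα

theorem dist_le_of_adj_of_plyRadius_le (hα : 0 < α) {u w : V} (h : G.Adj u w)
    {p : EuclideanSpace ℝ (Fin 2)} (hp : plyRadius G ρ α u ≤ dist p (ρ u)) :
    dist p (ρ w) ≤ (1 + 1 / α) * dist p (ρ u) := by
  have hedge : dist (ρ u) (ρ w) ≤ dist p (ρ u) / α := by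
    rw [le_div_iff₀ hα, mul_comm]
    exact (mul_dist_le_plyRadius ρ hα.le h).trans hp
  calc dist p (ρ w) ≤ dist p (ρ u) + dist (ρ u) (ρ w) := dist_triangle _ _ _
    _ ≤ dist p (ρ u) + dist p (ρ u) / α := by gcongr
    _ = (1 + 1 / α) * dist p (ρ u) := by ring

theorem card_le_plyCount {S : Finset V} {q : EuclideanSpace ℝ (Fin 2)}
    (hS : ∀ v ∈ S, q ∈ ball (ρ v) (plyRadius G ρ α v)) : #S ≤ plyCount G ρ α q := by
  rw [plyCount, ← Set.ncard_coe_finset]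
  exact Set.ncard_le_ncard hS (Set.toFinite _)

theorem exists_le_plyCount_of_annulus (hα : 0 ≤ α) {c t : ℝ} (hc : 0 < c) (ht : 0 < t)
    (p : EuclideanSpace ℝ (Fin 2)) (S : Finset V)
    (hS : ∀ v ∈ S, α * dist p (ρ v) ≤ plyRadius G ρ α v ∧ t ≤ dist p (ρ v) ∧
      dist p (ρ v) ≤ c * t) :
    ∃ q, α ^ 2 / ((1 + α) ^ 2 * c ^ 2) * #S ≤ plyCount G ρ α q := by
  obtain ⟨q, hq⟩ := exists_sum_pow_radius_le_card_mul S ρ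
    (r := fun v => α * dist p (ρ v)) (fun v _ => by positivity) p
    (R := (1 + α) * c * t) (by positivity) fun v hv y hy => by
      rw [mem_ball] at hy ⊢
      calc dist y p ≤ dist y (ρ v) + dist p (ρ v) := dist_triangle_right _ _ _
        _ < α * dist p (ρ v) + dist p (ρ v) := by gcongr
        _ ≤ (1 + α) * c * t := by nlinarith [(hS v hv).2.2]
  refine ⟨q, ?_⟩
  rw [finrank_euclideanSpace_fin] at hq
  have hlower : #S * (α * t) ^ 2 ≤ ∑ v ∈ S, (α * dist p (ρ v)) ^ 2 := by
    rw [← nsmul_eq_mul]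
    exact card_nsmul_le_sum _ _ _ fun v hv => by gcongr; exact (hS v hv).2.1
  have hcount : (#{v ∈ S | q ∈ ball (ρ v) (α * dist p (ρ v))} : ℝ) ≤ plyCount G ρ α q :=
    Nat.cast_le.2 <| card_le_plyCount ρ fun v hv =>
      ball_subset_ball (hS v (mem_filter.1 hv).1).1 (mem_filter.1 hv).2
  have key : α ^ 2 * #S * t ^ 2 ≤ plyCount G ρ α q * ((1 + α) ^ 2 * c ^ 2) * t ^ 2 :=
    calc α ^ 2 * #S * t ^ 2 = #S * (α * t) ^ 2 := by ring
      _ ≤ #{v ∈ S | q ∈ ball (ρ v) (α * dist p (ρ v))} * ((1 + α) * c * t) ^ 2 :=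
        hlower.trans hq
      _ ≤ plyCount G ρ α q * ((1 + α) * c * t) ^ 2 := by gcongr
      _ = plyCount G ρ α q * ((1 + α) ^ 2 * c ^ 2) * t ^ 2 := by ring
  rw [div_mul_eq_mul_div, div_le_iff₀ (by positivity)]
  exact le_of_mul_le_mul_right key (by positivity)

end PlyDisks

instance (h : ℕ) : Finite {l : List Bool // l.length ≤ h} :=
  (List.finite_length_le Bool h).to_subtype

instance (m h : ℕ) : Finite (TreeApexVertex m h) :=
  inferInstanceAs (Finite (Option _))

section TreesWithApex

variable {m h : ℕ}

theorem treesWithApex_adj_none_some (i : Fin m) (l : {l : List Bool // l.length ≤ h}) :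
    (treesWithApex m h).Adj none (some (i, l)) :=
  (SimpleGraph.fromRel_adj _ _ _).2 ⟨nofun, .inl (.inl ⟨rfl, nofun⟩)⟩

theorem treesWithApex_adj_of_eq_append (i : Fin m) {l l' : {l : List Bool // l.length ≤ h}}
    {b : Bool} (hl : l'.1 = l.1 ++ [b]) :
    (treesWithApex m h).Adj (some (i, l)) (some (i, l')) := by
  refine (SimpleGraph.fromRel_adj _ _ _).2 ⟨fun heq => ?_, .inl (.inr ⟨i, l, l', b, rfl, rfl, hl⟩)⟩
  have hll : l.1 = l'.1 := congrArg (·.2.1) (Option.some.inj heq)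
  have := congrArg List.length (hll.trans hl)
  simp at this

theorem pow_length_bounds_of_eq_append (f : {l : List Bool // l.length ≤ h} → ℝ) {c : ℝ}
    (hc : 0 ≤ c) (hf : ∀ (u v : {l : List Bool // l.length ≤ h}) (b : Bool), v.1 = u.1 ++ [b] →
      f v ≤ c * f u ∧ f u ≤ c * f v)
    (l : {l : List Bool // l.length ≤ h}) :
    f l ≤ c ^ l.1.length * f ⟨[], Nat.zero_le h⟩ ∧
      f ⟨[], Nat.zero_le h⟩ ≤ c ^ l.1.length * f l := by
  obtain ⟨l, hl⟩ := l
  induction l using List.reverseRecOn with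
  | nil => simp
  | append_singleton l b ih =>
    have hl' : l.length ≤ h := by simp at hl; omega
    obtain ⟨ih₁, ih₂⟩ := ih hl'
    obtain ⟨hchild, hparent⟩ := hf ⟨l, hl'⟩ ⟨l ++ [b], hl⟩ b rfl
    simp only [List.length_append, List.length_singleton, pow_succ]
    constructor
    · calc f ⟨l ++ [b], hl⟩ ≤ c * f ⟨l, hl'⟩ := hchild
        _ ≤ c * (c ^ l.length * f ⟨[], Nat.zero_le h⟩) := by gcongr
        _ = _ := by ring
    · calc f ⟨[], Nat.zero_le h⟩ ≤ c ^ l.length * f ⟨l, hl'⟩ := ih₂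
        _ ≤ c ^ l.length * (c * f ⟨l ++ [b], hl⟩) := by gcongr
        _ = _ := by ring

variable {ρ : TreeApexVertex m h → EuclideanSpace ℝ (Fin 2)} {α : ℝ}

theorem le_plyCount_of_forall_tree {q : EuclideanSpace ℝ (Fin 2)}
    (hq : ∀ i : Fin m, ∃ l, q ∈ ball (ρ (some (i, l)))
      (plyRadius (treesWithApex m h) ρ α (some (i, l)))) :
    m ≤ plyCount (treesWithApex m h) ρ α q := by
  choose l hl using hq
  set vertex : Fin m → TreeApexVertex m h := fun i => some (i, l i)
  have hinj : Function.Injective vertex := fun i j hij => congrArg Prod.fst (Option.some.inj hij)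
  have hcard := card_le_plyCount ρ (S := univ.image vertex) fun v hv => by
    obtain ⟨j, -, rfl⟩ := mem_image.1 hv
    exact hl j
  rwa [card_image_of_injective _ hinj, card_univ, Fintype.card_fin] at hcard

theorem dist_apex_bounds_of_tree_avoids_apex (hα : 0 < α) (i : Fin m)
    (hi : ∀ l, plyRadius (treesWithApex m h) ρ α (some (i, l)) ≤ dist (ρ none) (ρ (some (i, l))))
    (l : {l : List Bool // l.length ≤ h}) :
    dist (ρ none) (ρ (some (i, l))) ≤
        (1 + 1 / α) ^ l.1.length * dist (ρ none) (ρ (some (i, ⟨[], Nat.zero_le h⟩))) ∧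
      dist (ρ none) (ρ (some (i, ⟨[], Nat.zero_le h⟩))) ≤
        (1 + 1 / α) ^ l.1.length * dist (ρ none) (ρ (some (i, l))) :=
  pow_length_bounds_of_eq_append (fun l => dist (ρ none) (ρ (some (i, l)))) (by positivity)
    (fun u v _ huv =>
      ⟨dist_le_of_adj_of_plyRadius_le ρ hα (treesWithApex_adj_of_eq_append i huv) (hi u),
        dist_le_of_adj_of_plyRadius_le ρ hα (treesWithApex_adj_of_eq_append i huv).symm (hi v)⟩) l

theorem exists_le_plyCount_of_tree_avoids_apex (hα : 0 < α) (hρ : Function.Injective ρ)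
    (i : Fin m) (hi : ∀ l, ρ none ∉ ball (ρ (some (i, l)))
      (plyRadius (treesWithApex m h) ρ α (some (i, l)))) :
    ∃ q, α ^ 2 / ((1 + α) ^ 2 * (1 + 1 / α) ^ 2) * 2 ^ h / (2 * h) ≤
      plyCount (treesWithApex m h) ρ α q := by
  set c := 1 + 1 / α
  have hc : 0 < c := by positivity
  set D : {l : List Bool // l.length ≤ h} → ℝ := fun l => dist (ρ none) (ρ (some (i, l)))
  have hD : ∀ l, 0 < D l := fun l => dist_pos.2 (hρ.ne nofun)
  have hapex : ∀ l, α * D l ≤ plyRadius _ ρ α (some (i, l)) := fun l => by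
    simpa only [dist_comm] using
      mul_dist_le_plyRadius ρ hα.le (treesWithApex_adj_none_some i l).symm
  have hbounds := dist_apex_bounds_of_tree_avoids_apex hα i fun l => by
    simpa [dist_comm] using hi l
  set leaf : (Fin h → Bool) → {l : List Bool // l.length ≤ h} :=
    fun g => ⟨List.ofFn g, List.length_ofFn.le⟩
  have hleaf : ∀ g ∈ (univ : Finset (Fin h → Bool)),
      D ⟨[], Nat.zero_le h⟩ / c ^ h ≤ D (leaf g) ∧
        D (leaf g) ≤ c ^ (2 * h) * (D ⟨[], Nat.zero_le h⟩ / c ^ h) := by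
    intro g _
    obtain ⟨h₁, h₂⟩ := hbounds (leaf g)
    simp only [leaf, List.length_ofFn] at h₁ h₂
    constructor
    · rw [div_le_iff₀ (pow_pos hc h), mul_comm]
      exact h₂
    · rwa [two_mul, pow_add, mul_assoc, mul_div_cancel₀ _ (pow_pos hc h).ne']
  obtain ⟨t, ht, hbucket⟩ := exists_geometric_bucket univ (D ∘ leaf)
    (div_pos (hD _) (pow_pos hc h)) hc (2 * h) hleaf
  set leafVertex : (Fin h → Bool) → TreeApexVertex m h := fun g => some (i, leaf g)
  have hinj : Function.Injective leafVertex :=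
    fun g g' hgg' => List.ofFn_injective (congrArg (·.2.1) (Option.some.inj hgg'))
  obtain ⟨q, hq⟩ := exists_le_plyCount_of_annulus ρ hα.le hc ht (ρ none)
    ((univ.filter fun g => t ≤ D (leaf g) ∧ D (leaf g) ≤ c * t).image leafVertex) fun v hv => by
      obtain ⟨g, hg, rfl⟩ := mem_image.1 hv
      exact ⟨hapex (leaf g), (mem_filter.1 hg).2⟩
  refine ⟨q, le_trans ?_ hq⟩
  rw [card_image_of_injective _ hinj, mul_div_assoc]
  gcongr
  simpa using hbucket

end TreesWithApex

theorem stmt8_general (m h : ℕ)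
    (α : ℝ) (hα0 : 0 < α) (c : ℝ) (hc : c = 1 + 1 / α)
    (ρ : TreeApexVertex m h → EuclideanSpace ℝ (Fin 2))
    (hρ : Function.Injective ρ) :
    ∃ q : EuclideanSpace ℝ (Fin 2),
      min (m : ℝ) (α ^ 2 / ((1 + α) ^ 2 * c ^ 2) * 2 ^ h / (2 * h)) ≤
        (Set.ncard {v : TreeApexVertex m h |
          q ∈ Metric.ball (ρ v) (plyRadius (treesWithApex m h) ρ α v)} : ℝ) := by
  subst hc
  by_cases hall : ∀ i : Fin m, ∃ l, ρ none ∈ ball (ρ (some (i, l)))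
      (plyRadius (treesWithApex m h) ρ α (some (i, l)))
  · exact ⟨ρ none, (min_le_left _ _).trans (Nat.cast_le.2 (le_plyCount_of_forall_tree hall))⟩
  · obtain ⟨i, hi⟩ := not_forall.1 hall
    obtain ⟨q, hq⟩ := exists_le_plyCount_of_tree_avoids_apex hα0 hρ i (not_exists.1 hi)
    exact ⟨q, (min_le_right _ _).trans hq⟩

/-- For `m, h ≥ 1`, `0 < α ≤ 1/2` and `c = 1 + 1/α`, every
straight-line drawing of `G(m,h)` has ply number (with parameter `α`) at least
`min( m , (α²/((1+α)²·c²))·2^h/(2h) )`. -/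
theorem stmt8 (m h : ℕ) (hm : 1 ≤ m) (hh : 1 ≤ h)
    (α : ℝ) (hα0 : 0 < α) (hα : α ≤ 1 / 2) (c : ℝ) (hc : c = 1 + 1 / α)
    (ρ : TreeApexVertex m h → EuclideanSpace ℝ (Fin 2))
    (hρ : Function.Injective ρ) :
    ∃ q : EuclideanSpace ℝ (Fin 2),
      min (m : ℝ) (α ^ 2 / ((1 + α) ^ 2 * c ^ 2) * 2 ^ h / (2 * h)) ≤
        (Set.ncard {v : TreeApexVertex m h |
          q ∈ Metric.ball (ρ v) (plyRadius (treesWithApex m h) ρ α v)} : ℝ) :=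
  stmt8_general m h α hα0 c hc ρ hρ
end

section
/- Let I be a finite index set, let R > 0, let x₀ ∈ ℝ², and for each i ∈ I let B(x_i, r_i) be an open disk in the plane with r_i > 0 such that B(x_i, r_i) ⊆ B(x₀, R). Then there exists a point q ∈ ℝ² that is contained in at least (∑_{i ∈ I} r_i²) / R² of the disks B(x_i, r_i); that is, the maximum depth of the family of disks is at least the ratio of the total area of the disks to the area of the containing disk. -/
/-!
The depth function `p ↦ #{i | p ∈ B(x i, r i)}` integrates to the total area of the disks and
vanishes outside `B(x₀, R)`, so its average over `B(x₀, R)` is `∑ r i² / R²`; by the first moment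
method some point of `B(x₀, R)` has depth at least this average.
-/

open MeasureTheory Metric ENNReal Module

section Depth

variable {α ι : Type*} [MeasurableSpace α] [Fintype ι] {μ : Measure α} {s : ι → Set α}

theorem lintegral_ncard_mem_eq_sum_measure (hs : ∀ i, MeasurableSet (s i)) :
    ∫⁻ p, ({i | p ∈ s i}.ncard : ℝ≥0∞) ∂μ = ∑ i, μ (s i) := by
  classical
  have hcount : ∀ p, ({i | p ∈ s i}.ncard : ℝ≥0∞) = ∑ i, (s i).indicator 1 p := by
    intro p
    simp [Set.indicator_apply, Finset.sum_boole, Set.ncard_eq_toFinset_card']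
  simp_rw [hcount]
  rw [lintegral_finsetSum _ fun i _ => measurable_one.indicator (hs i)]
  simp_rw [lintegral_indicator_one (hs _)]

theorem exists_mem_sum_measure_div_le_ncard_mem {t : Set α} (hs : ∀ i, MeasurableSet (s i))
    (hst : ∀ i, s i ⊆ t) (ht : MeasurableSet t) (ht₀ : μ t ≠ 0) (ht_top : μ t ≠ ∞) :
    ∃ q ∈ t, (∑ i, μ (s i)) / μ t ≤ {i | q ∈ s i}.ncard := by
  have hint : ∫⁻ p in t, ({i | p ∈ s i}.ncard : ℝ≥0∞) ∂μ = ∑ i, μ (s i) := by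
    rw [lintegral_ncard_mem_eq_sum_measure hs]
    simp_rw [Measure.restrict_apply (hs _), Set.inter_eq_left.2 (hst _)]
  have hfin : ∑ i, μ (s i) ≠ ∞ :=
    (sum_ne_top).2 fun i _ => ne_top_of_le_ne_top ht_top (measure_mono (hst i))
  obtain ⟨q, hq, hle⟩ := exists_setLAverage_le ht₀ ht.nullMeasurableSet (hint ▸ hfin)
  exact ⟨q, hq, by rwa [setLAverage_eq, hint] at hle⟩

end Depth

theorem exists_sum_pow_div_le_ncard_mem_ball {E ι : Type*} [NormedAddCommGroup E]
    [NormedSpace ℝ E] [FiniteDimensional ℝ E] [Nontrivial E] [MeasurableSpace E] [BorelSpace E]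
    (μ : Measure E) [μ.IsAddHaarMeasure] [Fintype ι] {R : ℝ} (hR : 0 < R) {x₀ : E} {x : ι → E}
    {r : ι → ℝ} (hr : ∀ i, 0 ≤ r i) (hsub : ∀ i, ball (x i) (r i) ⊆ ball x₀ R) :
    ∃ q, (∑ i, r i ^ finrank ℝ E) / R ^ finrank ℝ E ≤ {i | q ∈ ball (x i) (r i)}.ncard := by
  obtain ⟨q, -, hq⟩ := exists_mem_sum_measure_div_le_ncard_mem (μ := μ)
    (fun i => measurableSet_ball) hsub measurableSet_ball (measure_ball_pos μ x₀ hR).ne'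
    measure_ball_lt_top.ne
  have hunit₀ : μ (ball 0 1) ≠ 0 := (measure_ball_pos μ 0 one_pos).ne'
  have hunit_top : μ (ball 0 1) ≠ ∞ := measure_ball_lt_top.ne
  have hratio : (∑ i, μ (ball (x i) (r i))) / μ (ball x₀ R)
      = ENNReal.ofReal ((∑ i, r i ^ finrank ℝ E) / R ^ finrank ℝ E) := by
    simp_rw [Measure.addHaar_ball μ _ (hr _), Measure.addHaar_ball μ _ hR.le, ← Finset.sum_mul,
      ENNReal.mul_div_mul_right _ _ hunit₀ hunit_top,
      ← ENNReal.ofReal_sum_of_nonneg fun i _ => pow_nonneg (hr i) _]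
    rw [ENNReal.ofReal_div_of_pos (by positivity)]
  refine ⟨q, ?_⟩
  rw [hratio, ← ENNReal.ofReal_natCast] at hq
  exact (ENNReal.ofReal_le_ofReal_iff (Nat.cast_nonneg _)).1 hq

/-- If finitely many open disks `B(x i, r i)` with `r i > 0`
are all contained in a disk `B(x₀, R)`, then some point lies in at least
`(∑ r i²)/R²` of them: the maximum depth of the family is at least the ratio
of the total area of the disks to the area of the containing disk. -/
theorem stmt10 (I : Type*) [Fintype I] (R : ℝ) (hR : 0 < R)
    (x₀ : EuclideanSpace ℝ (Fin 2)) (x : I → EuclideanSpace ℝ (Fin 2))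
    (r : I → ℝ) (hr : ∀ i, 0 < r i)
    (hsub : ∀ i, Metric.ball (x i) (r i) ⊆ Metric.ball x₀ R) :
    ∃ q : EuclideanSpace ℝ (Fin 2),
      (∑ i, r i ^ 2) / R ^ 2 ≤ (Set.ncard {i | q ∈ Metric.ball (x i) (r i)} : ℝ) := by
  simpa only [finrank_euclideanSpace_fin] using
    exists_sum_pow_div_le_ncard_mem_ball volume hR (fun i => (hr i).le) hsub
end

section
/- For natural Δ ≥ 3, let f(Δ) = sin(π/Δ)/(1 + sin(π/Δ)) and let α(Δ) = f(Δ)·√(1 − 2·f(Δ)·cos(2π/Δ) + f(Δ)²) − f(Δ)³/(1 − f(Δ)). Then Δ·α(Δ) tends to π as Δ → ∞; in particular α(Δ) = Θ(1/Δ). -/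
open Real Filter Topology

/-! Since `sin x ~ x`, the quantity `f(Δ) = sin(π/Δ)/(1 + sin(π/Δ))` tends to `0` with
`Δ·f(Δ) → π`. Factoring `α = f·(√(1 - 2f·cos(2π/Δ) + f²) - f²/(1 - f))`, the bracket tends to
`√1 - 0 = 1`, so `Δ·α(Δ) → π`. -/

lemma Real.mul_sin_div_eq_mul_sinc (c : ℝ) {x : ℝ} (hx : x ≠ 0) :
    x * sin (c / x) = c * sinc (c / x) := by
  rcases eq_or_ne c 0 with rfl | hc
  · simp
  · rw [sinc_of_ne_zero (div_ne_zero hc hx)]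
    field_simp

lemma Real.tendsto_mul_sin_div_atTop (c : ℝ) :
    Tendsto (fun x : ℝ => x * sin (c / x)) atTop (𝓝 c) := by
  have hsinc : Tendsto (fun x : ℝ => c * sinc (c / x)) atTop (𝓝 c) := by
    simpa [sinc_zero] using
      ((continuous_sinc.tendsto 0).comp (tendsto_const_nhds.div_atTop tendsto_id)).const_mul c
  refine hsinc.congr' ?_
  filter_upwards [eventually_ne_atTop 0] with x hx
  exact (mul_sin_div_eq_mul_sinc c hx).symm

lemma Real.tendsto_natCast_mul_sin_div (c : ℝ) :
    Tendsto (fun n : ℕ => (n : ℝ) * sin (c / n)) atTop (𝓝 c) :=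
  (tendsto_mul_sin_div_atTop c).comp tendsto_natCast_atTop_atTop

lemma tendsto_mul_mul_sqrt_sub_cube_div {ι : Type*} {l : Filter ι} {u f c : ι → ℝ} {L a : ℝ}
    (hf : Tendsto f l (𝓝 0)) (huf : Tendsto (fun i => u i * f i) l (𝓝 L))
    (hc : Tendsto c l (𝓝 a)) :
    Tendsto (fun i => u i * (f i * √(1 - 2 * f i * c i + f i ^ 2) - f i ^ 3 / (1 - f i)))
      l (𝓝 L) := by
  have hsqrt : Tendsto (fun i => √(1 - 2 * f i * c i + f i ^ 2)) l (𝓝 1) := by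
    simpa using
      (((tendsto_const_nhds (x := (1 : ℝ))).sub ((hf.const_mul 2).mul hc)).add (hf.pow 2)).sqrt
  have hquot : Tendsto (fun i => f i ^ 2 / (1 - f i)) l (𝓝 0) := by
    simpa [Pi.div_def] using
      (hf.pow 2).div (tendsto_const_nhds.sub hf) (by norm_num : (1 : ℝ) - 0 ≠ 0)
  simpa using (huf.mul (hsqrt.sub hquot)).congr fun i => by ring

/-- With `f(Δ) = sin(π/Δ)/(1 + sin(π/Δ))` and
`α(Δ) = f(Δ)·√(1 − 2f(Δ)·cos(2π/Δ) + f(Δ)²) − f(Δ)³/(1 − f(Δ))`, we have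
`Δ·α(Δ) → π` as `Δ → ∞`; in particular `α(Δ) = Θ(1/Δ)`. -/
theorem stmt12 (f A : ℕ → ℝ)
    (hf : ∀ Δ : ℕ, f Δ = Real.sin (π / Δ) / (1 + Real.sin (π / Δ)))
    (hA : ∀ Δ : ℕ, A Δ =
      f Δ * Real.sqrt (1 - 2 * f Δ * Real.cos (2 * π / Δ) + f Δ ^ 2)
        - f Δ ^ 3 / (1 - f Δ)) :
    Tendsto (fun Δ : ℕ => (Δ : ℝ) * A Δ) atTop (nhds π) := by
  have hsin : Tendsto (fun Δ : ℕ => sin (π / Δ)) atTop (𝓝 0) :=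
    (continuous_sin.tendsto' 0 0 sin_zero).comp (tendsto_const_div_atTop_nhds_zero_nat π)
  have hden : Tendsto (fun Δ : ℕ => 1 + sin (π / Δ)) atTop (𝓝 1) := by
    simpa using hsin.const_add 1
  have hf0 : Tendsto f atTop (𝓝 0) := by
    rw [funext hf]
    simpa [Pi.div_def] using hsin.div hden one_ne_zero
  have hΔf : Tendsto (fun Δ : ℕ => (Δ : ℝ) * f Δ) atTop (𝓝 π) := by
    simpa [hf, Pi.div_def, mul_div_assoc] using
      (tendsto_natCast_mul_sin_div π).div hden one_ne_zero
  have hcos : Tendsto (fun Δ : ℕ => cos (2 * π / Δ)) atTop (𝓝 1) :=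
    (continuous_cos.tendsto' 0 1 cos_zero).comp (tendsto_const_div_atTop_nhds_zero_nat _)
  simpa [hA] using tendsto_mul_mul_sqrt_sub_cube_div hf0 hΔf hcos
end

section
/- Let X be a metric space, let α > 0, set c = 1 + 1/α, let v ∈ X, and let p : ℕ → X be a sequence with dist(v, p 0) = 1. Suppose that for every i < n, both α·dist(p i, p (i+1)) ≤ dist(v, p i) and α·dist(p i, p (i+1)) ≤ dist(v, p (i+1)) (i.e., neither endpoint of any edge has a ply disk of radius α times that edge length containing v). Then c^{−n} ≤ dist(v, p n) ≤ c^{n}. -/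
/-! Each hypothesis bounds an edge by `1/α` times the distance from `v` to one of its endpoints,
so by the triangle inequality the distances from `v` to consecutive path vertices differ by a
factor of at most `c = 1 + 1/α`; starting from `1`, they grow and shrink at most geometrically. -/

theorem dist_le_one_add_one_div_mul {X : Type*} [PseudoMetricSpace X] {α : ℝ} (hα : 0 < α)
    {v x y : X} (h : α * dist x y ≤ dist v y) : dist v x ≤ (1 + 1 / α) * dist v y := by
  have hxy : dist x y ≤ dist v y / α := by rwa [le_div_iff₀' hα]
  calc dist v x ≤ dist v y + dist x y := by rw [dist_comm x y]; exact dist_triangle v y x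
    _ ≤ dist v y + dist v y / α := by gcongr
    _ = (1 + 1 / α) * dist v y := by ring

/-- Let `c = 1 + 1/α` and let `p` be a sequence in a metric
space with `dist v (p 0) = 1` such that for every `i < n` neither endpoint of
the edge `(p i, p (i+1))` has a ply disk of radius `α` times that edge length
containing `v`.  Then `c^{-n} ≤ dist v (p n) ≤ c^n`. -/
theorem stmt17 {X : Type*} [MetricSpace X] (α : ℝ) (hα : 0 < α)
    (c : ℝ) (hc : c = 1 + 1 / α) (v : X) (p : ℕ → X) (h0 : dist v (p 0) = 1)
    (n : ℕ)
    (h : ∀ i : ℕ, i < n →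
      α * dist (p i) (p (i + 1)) ≤ dist v (p i) ∧
      α * dist (p i) (p (i + 1)) ≤ dist v (p (i + 1))) :
    (c ^ n)⁻¹ ≤ dist v (p n) ∧ dist v (p n) ≤ c ^ n := by
  have hc0 : 0 < c := by rw [hc]; positivity
  constructor
  · have hshrink : ∀ i < n, c⁻¹ * dist v (p i) ≤ dist v (p (i + 1)) := fun i hi => by
      rw [inv_mul_le_iff₀ hc0, hc]
      exact dist_le_one_add_one_div_mul hα (h i hi).2
    simpa [h0, inv_pow] using
      geom_le (u := fun i => dist v (p i)) (inv_nonneg.2 hc0.le) n hshrink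
  · have hgrow : ∀ i < n, dist v (p (i + 1)) ≤ c * dist v (p i) := fun i hi => by
      rw [hc]
      exact dist_le_one_add_one_div_mul hα (by rw [dist_comm]; exact (h i hi).1)
    simpa [h0] using le_geom (u := fun i => dist v (p i)) hc0.le n hgrow
end

section
/- Let 0 < β ≤ π/2 and let q ∈ ℝ² be a point with ‖q − (1,0)‖ < sin β. Then q ≠ (0,0) and the angle at the origin between q and the point (1,0) is strictly less than β. That is, the open disk of radius sin β centered at the point (1,0) is contained in the open wedge of half-angle β around the positive x-axis with apex at the origin. -/
/-!
Completing the square in the law of cosines gives, for `θ = ∠(q, e)`,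
`‖q - e‖² = (‖q‖ - ‖e‖ cos θ)² + (‖e‖ sin θ)²`, so `‖q - e‖ ≥ ‖e‖ sin θ`; when `θ ≥ π/2` even
`‖q - e‖ ≥ ‖e‖`. Hence `‖q - e‖ < ‖e‖ sin β` forces `θ < β`, by monotonicity of `sin` on
`[0, π/2]`. The point `q` is nonzero because the angle at `0` is `π/2 ≥ β`.
-/

open Real

namespace InnerProductGeometry

variable {V : Type*} [NormedAddCommGroup V] [InnerProductSpace ℝ V]

theorem norm_sub_sq_eq_sq_add_sq_sin_angle (x y : V) :
    ‖x - y‖ ^ 2 = (‖x‖ - ‖y‖ * cos (angle x y)) ^ 2 + (‖y‖ * sin (angle x y)) ^ 2 := by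
  rw [sq ‖x - y‖, norm_sub_sq_eq_norm_sq_add_norm_sq_sub_two_mul_norm_mul_norm_mul_cos_angle]
  linear_combination -‖y‖ ^ 2 * sin_sq_add_cos_sq (angle x y)

theorem norm_mul_sin_angle_le_norm_sub (x y : V) : ‖y‖ * sin (angle x y) ≤ ‖x - y‖ :=
  abs_le_of_sq_le_sq' (by nlinarith [norm_sub_sq_eq_sq_add_sq_sin_angle x y]) (norm_nonneg _) |>.2

theorem norm_le_norm_sub_of_pi_div_two_le_angle {x y : V} (h : π / 2 ≤ angle x y) :
    ‖y‖ ≤ ‖x - y‖ := by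
  have hcos : cos (angle x y) ≤ 0 :=
    cos_nonpos_of_pi_div_two_le_of_le h (by linarith [angle_le_pi x y])
  refine abs_le_of_sq_le_sq' ?_ (norm_nonneg _) |>.2
  rw [sq ‖x - y‖, norm_sub_sq_eq_norm_sq_add_norm_sq_sub_two_mul_norm_mul_norm_mul_cos_angle]
  nlinarith [mul_nonneg (norm_nonneg x) (norm_nonneg y)]

theorem angle_lt_of_norm_sub_lt_norm_mul_sin {x y : V} {β : ℝ} (hβ0 : 0 < β) (hβ : β ≤ π / 2)
    (hxy : ‖x - y‖ < ‖y‖ * sin β) : angle x y < β := by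
  by_contra! hle
  have hsin_le_one : ‖y‖ * sin β ≤ ‖y‖ := mul_le_of_le_one_right (norm_nonneg y) (sin_le_one β)
  rcases lt_or_ge (angle x y) (π / 2) with hacute | hobtuse
  · have hsin : sin β ≤ sin (angle x y) :=
      strictMonoOn_sin.monotoneOn ⟨by linarith, hβ⟩ ⟨by linarith, hacute.le⟩ hle
    have := norm_mul_sin_angle_le_norm_sub x y
    nlinarith [norm_nonneg y]
  · linarith [norm_le_norm_sub_of_pi_div_two_le_angle hobtuse]

end InnerProductGeometry

/-- For `0 < β ≤ π/2`, the open disk of radius `sin β`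
centered at `(1,0)` is contained in the open wedge of half-angle `β` around
the positive `x`-axis with apex at the origin: any `q` with
`‖q − (1,0)‖ < sin β` is nonzero and the angle `∠ q 0 (1,0)` is less than `β`. -/
theorem stmt19 (β : ℝ) (hβ0 : 0 < β) (hβ : β ≤ π / 2)
    (q e : EuclideanSpace ℝ (Fin 2))
    (he : e = (EuclideanSpace.equiv (Fin 2) ℝ).symm ![1, 0])
    (hq : ‖q - e‖ < Real.sin β) :
    q ≠ 0 ∧ EuclideanGeometry.angle q 0 e < β := by
  have he_norm : ‖e‖ = 1 := by
    simp [he, EuclideanSpace.norm_eq, Fin.sum_univ_two]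
  have hangle : InnerProductGeometry.angle q e < β :=
    InnerProductGeometry.angle_lt_of_norm_sub_lt_norm_mul_sin hβ0 hβ (by rwa [he_norm, one_mul])
  refine ⟨?_, by simpa [EuclideanGeometry.angle] using hangle⟩
  rintro rfl
  rw [InnerProductGeometry.angle_zero_left] at hangle
  linarith
end
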